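/- arXiv:1803.09369 — 10 statements merged into one kernel-verified Lean document; each statement's English description precedes it below -/
import Mathlib

section
/- Let ρ > 0, β > 0 and α > 0. Suppose p, q : [0,∞) → ℝ are differentiable and satisfy, for all t ≥ 0, p'(t) = ρ(1 − e^{p(t)}) − q(t) and q'(t) = −βαρ(1 − e^{p(t)}). Then p(t) → 0 and q(t) → 0 as t → ∞. (Global asymptotic stability of the origin for the transformed single-agent consumption system.) -/
/-!
Along a solution, `V = (e^p - p - 1) + q² / (2B)` with `B = βαρ` satisfies `V' = -ρ (e^p - 1)²`,
so `V` is nonincreasing and `e^p` stays in a compact interval `[m, M] ⊂ (0, ∞)`.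
Since `V'` only controls `u = e^p - 1`, perturb `V` by a small cross term: for small `ε > 0`,
`W = V + ε u q` satisfies `W' ≤ -(ε m / 2) (u² + q²)`, and on the strip `m ≤ e^p ≤ M` both `V`
and `W` are comparable to `u² + q²`. Hence `W' ≤ -λ W`, so `W`, and with it `u² + q²`, decays
exponentially.
-/

open Filter Real Set Topology

lemma sq_exp_half_sub_one_le (x : ℝ) : (exp (x / 2) - 1) ^ 2 ≤ exp x - x - 1 := by
  have hsq : exp (x / 2) ^ 2 = exp x := by rw [← exp_nat_mul]; ring_nf
  nlinarith [add_one_le_exp (x / 2)]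

lemma exp_sub_sub_one_nonneg (x : ℝ) : 0 ≤ exp x - x - 1 := by
  linarith [add_one_le_exp x]

lemma exp_sub_sub_one_mul_exp_le (x : ℝ) : (exp x - x - 1) * exp x ≤ (exp x - 1) ^ 2 := by
  have hinv : exp (-x) * exp x = 1 := by rw [← exp_add, neg_add_cancel, exp_zero]
  nlinarith [mul_le_mul_of_nonneg_right (add_one_le_exp (-x)) (exp_pos x).le]

lemma sq_exp_sub_one_le (x : ℝ) : (exp x - 1) ^ 2 ≤ 2 * (exp x + 1) * (exp x - x - 1) := by
  have hsq : exp (x / 2) ^ 2 = exp x := by rw [← exp_nat_mul]; ring_nf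
  calc (exp x - 1) ^ 2 = (exp (x / 2) - 1) ^ 2 * (exp (x / 2) + 1) ^ 2 := by rw [← hsq]; ring
    _ ≤ (exp x - x - 1) * (2 * (exp x + 1)) := by
        refine mul_le_mul (sq_exp_half_sub_one_le x) ?_ (sq_nonneg _) (exp_sub_sub_one_nonneg x)
        rw [← hsq]
        nlinarith [sq_nonneg (exp (x / 2) - 1)]
    _ = 2 * (exp x + 1) * (exp x - x - 1) := by ring

lemma antitoneOn_Ici_of_hasDerivAt_nonpos {f f' : ℝ → ℝ} {a : ℝ}
    (hf : ∀ t, a ≤ t → HasDerivAt f (f' t) t) (hf' : ∀ t, a ≤ t → f' t ≤ 0) :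
    AntitoneOn f (Ici a) := by
  refine antitoneOn_of_hasDerivWithinAt_nonpos (f' := f') (convex_Ici a)
    (fun t ht => (hf t ht).continuousAt.continuousWithinAt) (fun t ht => ?_) (fun t ht => ?_)
  · exact (hf t (interior_subset ht)).hasDerivWithinAt
  · exact hf' t (interior_subset ht)

lemma le_mul_exp_neg_of_hasDerivAt_le_neg_mul {f f' : ℝ → ℝ} {k : ℝ}
    (hf : ∀ t, 0 ≤ t → HasDerivAt f (f' t) t) (hf' : ∀ t, 0 ≤ t → f' t ≤ -k * f t)
    {t : ℝ} (ht : 0 ≤ t) : f t ≤ f 0 * exp (-(k * t)) := by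
  have hdecr : AntitoneOn (fun s => f s * exp (k * s)) (Ici 0) := by
    refine antitoneOn_Ici_of_hasDerivAt_nonpos
      (fun s hs => (hf s hs).mul (((hasDerivAt_id' s).const_mul k).exp)) (fun s hs => ?_)
    nlinarith [mul_le_mul_of_nonneg_right (hf' s hs) (exp_pos (k * s)).le]
  have hG := hdecr self_mem_Ici ht ht
  simp only [mul_zero, exp_zero, mul_one] at hG
  calc f t = f t * exp (k * t) * exp (-(k * t)) := by rw [mul_assoc, ← exp_add]; simp
    _ ≤ f 0 * exp (-(k * t)) := by gcongr

lemma tendsto_nhds_zero_of_hasDerivAt_le_neg_mul {f f' : ℝ → ℝ} {k : ℝ} (hk : 0 < k)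
    (hf : ∀ t, 0 ≤ t → HasDerivAt f (f' t) t) (hf' : ∀ t, 0 ≤ t → f' t ≤ -k * f t)
    (hf₀ : ∀ t, 0 ≤ t → 0 ≤ f t) : Tendsto f atTop (𝓝 0) := by
  have hexp : Tendsto (fun t => f 0 * exp (-(k * t))) atTop (𝓝 0) := by
    simpa using (tendsto_exp_neg_atTop_nhds_zero.comp
      (tendsto_id.const_mul_atTop hk)).const_mul (f 0)
  refine squeeze_zero' ?_ ?_ hexp <;> filter_upwards [eventually_ge_atTop 0] with t ht
  · exact hf₀ t ht
  · exact le_mul_exp_neg_of_hasDerivAt_le_neg_mul hf hf' ht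

lemma tendsto_nhds_zero_of_sq_le {α : Type*} {l : Filter α} {f g : α → ℝ}
    (hg : Tendsto g l (𝓝 0)) (hfg : ∀ x, f x ^ 2 ≤ g x) : Tendsto f l (𝓝 0) := by
  refine squeeze_zero_norm (fun x => abs_le_sqrt (hfg x)) ?_
  simpa using hg.sqrt

lemma eventually_mul_le (a : ℝ) {b : ℝ} (hb : 0 < b) : ∀ᶠ ε in 𝓝[>] (0 : ℝ), ε * a ≤ b := by
  refine nhdsWithin_le_nhds ?_
  exact ((continuous_mul_const a).tendsto' 0 0 (zero_mul a)).eventually (ge_mem_nhds hb)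

noncomputable def lyapunov (B x y : ℝ) : ℝ := exp x - x - 1 + y ^ 2 / (2 * B)

noncomputable def strictLyapunov (B ε x y : ℝ) : ℝ := lyapunov B x y + ε * (exp x - 1) * y

section Lyapunov

variable {B : ℝ}

lemma lyapunov_nonneg (hB : 0 ≤ B) (x y : ℝ) : 0 ≤ lyapunov B x y :=
  add_nonneg (exp_sub_sub_one_nonneg x) (by positivity)

lemma exp_le_of_lyapunov_le (hB : 0 ≤ B) {x y c : ℝ} (h : lyapunov B x y ≤ c) :
    exp x ≤ 2 * (c + 1) := by
  have : 0 ≤ y ^ 2 / (2 * B) := by positivity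
  unfold lyapunov at h
  linarith [two_mul_le_exp (x := x)]

lemma exp_neg_le_of_lyapunov_le (hB : 0 ≤ B) {x y c : ℝ} (h : lyapunov B x y ≤ c) :
    exp (-(c + 1)) ≤ exp x := by
  have : 0 ≤ y ^ 2 / (2 * B) := by positivity
  unfold lyapunov at h
  exact exp_le_exp.2 (by linarith [exp_pos x])

lemma sq_add_sq_le_lyapunov (hB : 0 < B) {x y M : ℝ} (hM : exp x ≤ M) :
    (exp x - 1) ^ 2 + y ^ 2 ≤ 2 * (M + 1 + B) * lyapunov B x y := by
  have hF := exp_sub_sub_one_nonneg x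
  have hu : (exp x - 1) ^ 2 ≤ 2 * (M + 1 + B) * (exp x - x - 1) := by
    nlinarith [sq_exp_sub_one_le x]
  have hy : y ^ 2 ≤ 2 * (M + 1 + B) * (y ^ 2 / (2 * B)) := by
    have : 0 ≤ y ^ 2 / (2 * B) := by positivity
    have : y ^ 2 = 2 * B * (y ^ 2 / (2 * B)) := by field_simp
    nlinarith [exp_pos x]
  unfold lyapunov
  linarith

lemma lyapunov_le (hB : 0 ≤ B) {x y m : ℝ} (hm : 0 < m) (hmx : m ≤ exp x) :
    lyapunov B x y ≤ (1 / m + 1 / (2 * B)) * ((exp x - 1) ^ 2 + y ^ 2) := by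
  have hF : exp x - x - 1 ≤ (exp x - 1) ^ 2 / m := by
    rw [le_div_iff₀ hm]
    nlinarith [exp_sub_sub_one_mul_exp_le x, exp_sub_sub_one_nonneg x]
  have : 0 ≤ y ^ 2 / m := by positivity
  have : 0 ≤ (exp x - 1) ^ 2 / (2 * B) := by positivity
  unfold lyapunov
  linarith [show (1 / m + 1 / (2 * B)) * ((exp x - 1) ^ 2 + y ^ 2)
    = (exp x - 1) ^ 2 / m + y ^ 2 / m + (exp x - 1) ^ 2 / (2 * B) + y ^ 2 / (2 * B) by ring]

lemma sq_add_sq_le_strictLyapunov (hB : 0 < B) {x y M ε : ℝ} (hM : exp x ≤ M) (hε : 0 ≤ ε)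
    (hεM : ε * (2 * (M + 1 + B)) ≤ 1) :
    (exp x - 1) ^ 2 + y ^ 2 ≤ 4 * (M + 1 + B) * strictLyapunov B ε x y := by
  have hV := sq_add_sq_le_lyapunov (y := y) hB hM
  have hM₀ : 0 < M := (exp_pos x).trans_le hM
  have hcross : -((exp x - 1) * y) ≤ ((exp x - 1) ^ 2 + y ^ 2) / 2 := by
    nlinarith [sq_nonneg (exp x - 1 + y)]
  have hQ : 0 ≤ (exp x - 1) ^ 2 + y ^ 2 := by positivity
  unfold strictLyapunov
  nlinarith [mul_le_mul_of_nonneg_left hcross (by positivity : 0 ≤ ε * (2 * (M + 1 + B)))]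

lemma strictLyapunov_le (hB : 0 ≤ B) {x y m ε : ℝ} (hm : 0 < m) (hmx : m ≤ exp x)
    (hε : 0 ≤ ε) :
    strictLyapunov B ε x y ≤ (1 / m + 1 / (2 * B) + ε) * ((exp x - 1) ^ 2 + y ^ 2) := by
  have hV := lyapunov_le (y := y) hB hm hmx
  have hcross : (exp x - 1) * y ≤ (exp x - 1) ^ 2 + y ^ 2 := by
    nlinarith [sq_nonneg (exp x - 1 - y)]
  unfold strictLyapunov
  nlinarith [mul_le_mul_of_nonneg_left hcross hε]

end Lyapunov

lemma strictLyapunov_deriv_le {ρ B m M ε E u y : ℝ} (hρ : 0 ≤ ρ) (hε : 0 ≤ ε) (hmE : m ≤ E)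
    (hEM : E ≤ M) (hεB : ε * B ≤ ρ / 2) (hεM : ε * (2 * ρ * M ^ 2) ≤ m)
    (hεm : ε * (2 * m) ≤ ρ) :
    -ρ * u ^ 2 + ε * (B * u ^ 2 - E * (ρ * u + y) * y) ≤ -(ε * m / 2) * (u ^ 2 + y ^ 2) := by
  have hm : 0 ≤ m := le_trans (by positivity) hεM
  have hE : 0 ≤ E := hm.trans hmE
  -- `(ρ / 4) (u + 2 ε E y)² ≥ 0` absorbs the indefinite term `ε ρ E u y`
  have hcross : -(ε * ρ * E * u * y) ≤ ρ / 4 * u ^ 2 + ρ * ε ^ 2 * E ^ 2 * y ^ 2 := by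
    nlinarith [sq_nonneg (u + 2 * ε * E * y)]
  have hcoef : ρ * ε ^ 2 * E ^ 2 ≤ ε * m / 2 := by
    nlinarith [mul_le_mul_of_nonneg_left (pow_le_pow_left₀ hE hEM 2)
      (by positivity : 0 ≤ ρ * ε ^ 2), mul_le_mul_of_nonneg_left hεM hε]
  nlinarith [mul_le_mul_of_nonneg_right hcoef (sq_nonneg y),
    mul_le_mul_of_nonneg_right hεB (sq_nonneg u), mul_le_mul_of_nonneg_right hεm (sq_nonneg u),
    mul_le_mul_of_nonneg_right (mul_le_mul_of_nonneg_left hmE hε) (sq_nonneg y)]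

structure SolvesSystem (ρ B : ℝ) (p q : ℝ → ℝ) : Prop where
  hasDerivAt_fst : ∀ t, 0 ≤ t → HasDerivAt p (ρ * (1 - exp (p t)) - q t) t
  hasDerivAt_snd : ∀ t, 0 ≤ t → HasDerivAt q (B * (exp (p t) - 1)) t

namespace SolvesSystem

variable {ρ B : ℝ} {p q : ℝ → ℝ}

lemma hasDerivAt_lyapunov (h : SolvesSystem ρ B p q) (hB : B ≠ 0) {t : ℝ} (ht : 0 ≤ t) :
    HasDerivAt (fun t => lyapunov B (p t) (q t)) (-ρ * (exp (p t) - 1) ^ 2) t := by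
  have hp := h.hasDerivAt_fst t ht
  refine ((((hp.exp.sub hp).sub_const 1).add
    (((h.hasDerivAt_snd t ht).pow 2).div_const (2 * B)))).congr_deriv ?_
  field_simp
  ring

lemma hasDerivAt_strictLyapunov (h : SolvesSystem ρ B p q) (hB : B ≠ 0) (ε : ℝ) {t : ℝ}
    (ht : 0 ≤ t) :
    HasDerivAt (fun t => strictLyapunov B ε (p t) (q t))
      (-ρ * (exp (p t) - 1) ^ 2 + ε * (B * (exp (p t) - 1) ^ 2
        - exp (p t) * (ρ * (exp (p t) - 1) + q t) * q t)) t := by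
  refine ((h.hasDerivAt_lyapunov hB ht).add
    ((((h.hasDerivAt_fst t ht).exp.sub_const 1).const_mul ε).mul
      (h.hasDerivAt_snd t ht))).congr_deriv ?_
  ring

lemma lyapunov_le_lyapunov_zero (h : SolvesSystem ρ B p q) (hρ : 0 ≤ ρ) (hB : B ≠ 0) {t : ℝ}
    (ht : 0 ≤ t) : lyapunov B (p t) (q t) ≤ lyapunov B (p 0) (q 0) :=
  antitoneOn_Ici_of_hasDerivAt_nonpos (fun s hs => h.hasDerivAt_lyapunov hB hs)
    (fun s _ => by nlinarith [sq_nonneg (exp (p s) - 1)]) self_mem_Ici ht ht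

lemma tendsto_sq_add_sq (h : SolvesSystem ρ B p q) (hρ : 0 < ρ) (hB : 0 < B) :
    Tendsto (fun t => (exp (p t) - 1) ^ 2 + q t ^ 2) atTop (𝓝 0) := by
  set c := lyapunov B (p 0) (q 0)
  set m := exp (-(c + 1))
  set M := 2 * (c + 1)
  have hc : 0 ≤ c := lyapunov_nonneg hB.le _ _
  have hm : 0 < m := exp_pos _
  have hmp : ∀ t, 0 ≤ t → m ≤ exp (p t) := fun t ht =>
    exp_neg_le_of_lyapunov_le hB.le (h.lyapunov_le_lyapunov_zero hρ.le hB.ne' ht)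
  have hpM : ∀ t, 0 ≤ t → exp (p t) ≤ M := fun t ht =>
    exp_le_of_lyapunov_le hB.le (h.lyapunov_le_lyapunov_zero hρ.le hB.ne' ht)
  obtain ⟨ε, hε, hεB, hεM, hεm, hεK⟩ : ∃ ε, 0 < ε ∧ ε * B ≤ ρ / 2 ∧ ε * (2 * ρ * M ^ 2) ≤ m ∧
      ε * (2 * m) ≤ ρ ∧ ε * (2 * (M + 1 + B)) ≤ 1 :=
    (eventually_mem_nhdsWithin.and ((eventually_mul_le _ (by positivity)).and
      ((eventually_mul_le _ hm).and ((eventually_mul_le _ hρ).and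
        (eventually_mul_le _ one_pos))))).exists
  have hQW : ∀ t, 0 ≤ t → (exp (p t) - 1) ^ 2 + q t ^ 2
      ≤ 4 * (M + 1 + B) * strictLyapunov B ε (p t) (q t) := fun t ht =>
    sq_add_sq_le_strictLyapunov hB (hpM t ht) hε.le hεK
  set C := 1 / m + 1 / (2 * B) + ε
  have hC : 0 < C := by positivity
  have hW : Tendsto (fun t => strictLyapunov B ε (p t) (q t)) atTop (𝓝 0) := by
    refine tendsto_nhds_zero_of_hasDerivAt_le_neg_mul (k := ε * m / 2 / C) (by positivity)
      (fun t ht => h.hasDerivAt_strictLyapunov hB.ne' ε ht) (fun t ht => ?_) (fun t ht => ?_)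
    · have hWQ := strictLyapunov_le (y := q t) hB.le hm (hmp t ht) hε.le
      calc _ ≤ -(ε * m / 2) * ((exp (p t) - 1) ^ 2 + q t ^ 2) :=
            strictLyapunov_deriv_le hρ.le hε.le (hmp t ht) (hpM t ht) hεB hεM hεm
        _ ≤ -(ε * m / 2 / C) * strictLyapunov B ε (p t) (q t) := by
            rw [neg_mul, neg_mul, neg_le_neg_iff, div_mul_eq_mul_div, div_le_iff₀ hC]
            nlinarith [mul_le_mul_of_nonneg_left hWQ (by positivity : 0 ≤ ε * m / 2)]
    · nlinarith [hQW t ht, sq_nonneg (exp (p t) - 1), sq_nonneg (q t)]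
  refine squeeze_zero' (Eventually.of_forall fun t => by positivity) ?_
    (by simpa using hW.const_mul (4 * (M + 1 + B)))
  filter_upwards [eventually_ge_atTop 0] with t ht using hQW t ht

end SolvesSystem

/-- Global asymptotic stability of the origin for the transformed single-agent
consumption system `p' = ρ(1 − e^p) − q`, `q' = −βαρ(1 − e^p)`. -/
theorem single_agent_global_stability (ρ β α : ℝ) (hρ : 0 < ρ) (hβ : 0 < β) (hα : 0 < α)
    (p q : ℝ → ℝ)
    (hp : ∀ t : ℝ, 0 ≤ t → HasDerivAt p (ρ * (1 - Real.exp (p t)) - q t) t)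
    (hq : ∀ t : ℝ, 0 ≤ t → HasDerivAt q (-β * α * ρ * (1 - Real.exp (p t))) t) :
    Tendsto p atTop (nhds 0) ∧ Tendsto q atTop (nhds 0) := by
  have h : SolvesSystem ρ (β * α * ρ) p q := ⟨hp, fun t ht => (hq t ht).congr_deriv (by ring)⟩
  have hQ := h.tendsto_sq_add_sq hρ (by positivity)
  have hu : Tendsto (fun t => exp (p t) - 1) atTop (𝓝 0) :=
    tendsto_nhds_zero_of_sq_le hQ fun t => le_add_of_nonneg_right (sq_nonneg _)
  have hexp : Tendsto (fun t => exp (p t)) atTop (𝓝 1) := by simpa using hu.add_const 1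
  refine ⟨?_, tendsto_nhds_zero_of_sq_le hQ fun t => le_add_of_nonneg_left (sq_nonneg _)⟩
  simpa [Function.comp_def] using (continuousAt_log one_ne_zero).tendsto.comp hexp
end

section
/- Fix β₁,β₂ > 0, ν₁,ν₂ ∈ (0,1) and ρ₁,ρ₂ ∈ (0,1). Define A = β₁(1−ν₁)+β₂(1−ν₂), a = β₁(1−ν₁)−β₂(1−ν₂), B = β₁ν₁+β₂ν₂, b = −β₁ν₁+β₂ν₂, D = β₁(1−ν₁)(1−ρ₁)+β₂(1−ν₂)(1−ρ₂), d = −β₁(1−ν₁)(1−ρ₁)+β₂(1−ν₂)(1−ρ₂), and m = 1 − (DB − bd)/(AB + ba); assume m > 0 (which holds in this parameter range). Consider the system z'(t) = m(1 − e^{z(t)}) − u(t) + (b/B)w(t), u'(t) = (A + ba/B)·m·(e^{z(t)} − 1), w'(t) = a·m·(e^{z(t)} − 1) − B·w(t). If B² > a·b, then every solution (z,u,w) defined on [0,∞) satisfies (z(t),u(t),w(t)) → (0,0,0) as t → ∞. -/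
open Filter

/-!
With `X = exp z - 1`, the function `V = (exp z - z - 1) + u² / (2k) + Q w²` satisfies
`V' = -(m X² - (c + 2Qp) X w + 2QB w²)` along solutions, and `c p < m B` (that is, `a b < B²`)
is exactly what allows a `Q > 0` making this quadratic form positive definite. Hence `V` is
nonincreasing and `z` stays in a bounded interval, on which `exp z - z - 1`, `z²` and `X²` are
comparable. Adding a small cross term `η u z` to `V` gives a function `W`, comparable to
`z² + u² + w²`, with `W' ≤ -λ W`; so `W`, and with it `(z, u, w)`, decays exponentially.
-/

open Real Set Topology

theorem exp_sub_one_le_mul_exp (x : ℝ) : exp x - 1 ≤ x * exp x := by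
  have h := mul_le_mul_of_nonneg_left (add_one_le_exp (-x)) (exp_pos x).le
  rw [mul_comm (exp x) (exp (-x)), ← exp_add, neg_add_cancel, exp_zero] at h
  linarith

theorem abs_sub_one_le_exp_sub_sub_one (x : ℝ) : |x| - 1 ≤ exp x - x - 1 := by
  rcases le_total 0 x with hx | hx
  · rw [abs_of_nonneg hx]
    nlinarith [quadratic_le_exp_of_nonneg hx, sq_nonneg (x - 1)]
  · rw [abs_of_nonpos hx]
    linarith [exp_pos x]

theorem le_of_forall_mul_deriv_nonneg {f f' : ℝ → ℝ} {x : ℝ} (hf : ∀ y, HasDerivAt f (f' y) y)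
    (hf' : ∀ y ∈ uIcc 0 x, 0 ≤ y * f' y) : f 0 ≤ f x := by
  have hc : ContinuousOn f (uIcc 0 x) := fun y _ => (hf y).continuousAt.continuousWithinAt
  have hd : ∀ y ∈ interior (uIcc 0 x), HasDerivWithinAt f (f' y) (interior (uIcc 0 x)) y :=
    fun y _ => (hf y).hasDerivWithinAt
  rcases le_total 0 x with hx | hx
  · rw [uIcc_of_le hx] at hc hd hf'
    refine monotoneOn_of_hasDerivWithinAt_nonneg (convex_Icc 0 x) hc hd (fun y hy => ?_)
      (left_mem_Icc.2 hx) (right_mem_Icc.2 hx) hx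
    rw [interior_Icc] at hy
    exact nonneg_of_mul_nonneg_right (hf' y (Ioo_subset_Icc_self hy)) hy.1
  · rw [uIcc_of_ge hx] at hc hd hf'
    refine antitoneOn_of_hasDerivWithinAt_nonpos (convex_Icc x 0) hc hd (fun y hy => ?_)
      (left_mem_Icc.2 hx) (right_mem_Icc.2 hx) hx
    rw [interior_Icc] at hy
    exact nonpos_of_mul_nonneg_right (hf' y (Ioo_subset_Icc_self hy)) hy.2

theorem exp_neg_div_two_mul_sq_le {M x : ℝ} (hM : 0 ≤ M) (hx : -M ≤ x) :
    exp (-M) / 2 * x ^ 2 ≤ exp x - x - 1 := by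
  have hmono := le_of_forall_mul_deriv_nonneg (x := x)
    (f := fun y => exp y - y - 1 - exp (-M) / 2 * y ^ 2) (f' := fun y => exp y - 1 - exp (-M) * y)
    (fun y => by
      refine ((((hasDerivAt_exp y).sub (hasDerivAt_id y)).sub_const 1).sub
        ((hasDerivAt_pow 2 y).const_mul (exp (-M) / 2))).congr_deriv ?_
      norm_num; ring)
    (fun y hy => by
      have hMy : -M ≤ y := by rcases mem_uIcc.1 hy with h | h <;> linarith
      have hM1 : exp (-M) ≤ 1 := exp_le_one_iff.2 (by linarith)
      rcases le_total 0 y with h0 | h0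
      · exact mul_nonneg h0 (by nlinarith [add_one_le_exp y])
      · refine mul_nonneg_of_nonpos_of_nonpos h0 ?_
        nlinarith [exp_sub_one_le_mul_exp y, exp_le_exp.2 hMy])
  simp only [exp_zero] at hmono
  linarith

theorem exp_sub_sub_one_le_exp_div_two_mul_sq {M x : ℝ} (hM : 0 ≤ M) (hx : x ≤ M) :
    exp x - x - 1 ≤ exp M / 2 * x ^ 2 := by
  have hmono := le_of_forall_mul_deriv_nonneg (x := x)
    (f := fun y => exp M / 2 * y ^ 2 - (exp y - y - 1)) (f' := fun y => exp M * y - (exp y - 1))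
    (fun y => by
      refine (((hasDerivAt_pow 2 y).const_mul (exp M / 2)).sub
        (((hasDerivAt_exp y).sub (hasDerivAt_id y)).sub_const 1)).congr_deriv ?_
      norm_num; ring)
    (fun y hy => by
      have hyM : y ≤ M := by rcases mem_uIcc.1 hy with h | h <;> linarith
      have hM1 : 1 ≤ exp M := one_le_exp hM
      rcases le_total 0 y with h0 | h0
      · exact mul_nonneg h0 (by nlinarith [exp_sub_one_le_mul_exp y, exp_le_exp.2 hyM])
      · refine mul_nonneg_of_nonpos_of_nonpos h0 ?_
        nlinarith [add_one_le_exp y])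
  simp only [exp_zero] at hmono
  linarith

theorem abs_le_exp_mul_abs_exp_sub_one {M x : ℝ} (hx : |x| ≤ M) :
    |x| ≤ exp M * |exp x - 1| := by
  rcases le_total 0 x with h0 | h0
  · have h1 : x ≤ exp x - 1 := by linarith [add_one_le_exp x]
    rw [abs_of_nonneg h0, abs_of_nonneg (h0.trans h1)]
    nlinarith [one_le_exp (h0.trans (abs_of_nonneg h0 ▸ hx))]
  · rw [abs_of_nonpos h0] at hx ⊢
    rw [abs_of_nonpos (by linarith [exp_le_one_iff.2 h0])]
    have h1 : exp M * exp x ≥ 1 := by rw [← exp_add]; exact one_le_exp (by linarith)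
    nlinarith [exp_sub_one_le_mul_exp x, exp_pos M]

theorem le_mul_exp_of_hasDerivAt_le_mul {f f' : ℝ → ℝ} {K t : ℝ}
    (hf : ∀ s, 0 ≤ s → HasDerivAt f (f' s) s) (hK : ∀ s, 0 ≤ s → f' s ≤ K * f s) (ht : 0 ≤ t) :
    f t ≤ f 0 * exp (K * t) := by
  have hbound := le_gronwallBound_of_liminf_deriv_right_le (ε := 0) (b := t)
    (fun s hs => (hf s hs.1).continuousAt.continuousWithinAt)
    (fun s hs _ hr => (hf s hs.1).hasDerivWithinAt.liminf_right_slope_le hr) le_rfl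
    (fun s hs => by simpa using hK s hs.1) t ⟨ht, le_rfl⟩
  simpa [gronwallBound_ε0] using hbound

theorem tendsto_zero_of_strict_lyapunov {W W' S : ℝ → ℝ} {α β γ : ℝ} (hα : 0 < α) (hβ : 0 < β)
    (hγ : 0 < γ) (hW : ∀ t, 0 ≤ t → HasDerivAt W (W' t) t)
    (hW' : ∀ t, 0 ≤ t → W' t ≤ -β * S t) (hup : ∀ t, 0 ≤ t → W t ≤ α * S t)
    (hlow : ∀ t, 0 ≤ t → γ * S t ≤ W t) (hS : ∀ t, 0 ≤ S t) :
    Tendsto S atTop (𝓝 0) := by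
  have hdecay : ∀ t, 0 ≤ t → W t ≤ W 0 * exp (-(β / α) * t) :=
    fun t => le_mul_exp_of_hasDerivAt_le_mul hW fun s hs =>
      calc W' s ≤ -β * S s := hW' s hs
        _ ≤ -(β / α) * W s := by
          have := mul_le_mul_of_nonneg_left (hup s hs) (div_pos hβ hα).le
          rw [← mul_assoc, div_mul_cancel₀ _ hα.ne'] at this
          linarith
  have hlim : Tendsto (fun t => W 0 * exp (-(β / α) * t) / γ) atTop (𝓝 0) := by
    have hexp := tendsto_exp_atBot.comp
      (tendsto_neg_atTop_atBot.comp (tendsto_id.const_mul_atTop (div_pos hβ hα)))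
    simpa using (hexp.const_mul (W 0)).div_const γ
  refine tendsto_of_tendsto_of_tendsto_of_le_of_le' tendsto_const_nhds hlim
    (Eventually.of_forall hS) ?_
  filter_upwards [eventually_ge_atTop 0] with t ht
  rw [le_div_iff₀ hγ, mul_comm]
  exact (hlow t ht).trans (hdecay t ht)

theorem tendsto_zero_of_sq_le {ι : Type*} {l : Filter ι} {f S : ι → ℝ} (hS : Tendsto S l (𝓝 0))
    (hf : ∀ t, f t ^ 2 ≤ S t) : Tendsto f l (𝓝 0) := by
  refine squeeze_zero_norm (fun t => ?_) (by simpa using hS.sqrt)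
  rw [norm_eq_abs, ← sqrt_sq_eq_abs]
  exact sqrt_le_sqrt (hf t)

theorem exists_pos_mul_le_quadratic {m c s : ℝ} (hm : 0 < m) (hs : 0 < s)
    (h : c ^ 2 < 4 * m * s) :
    ∃ ε > 0, ∀ X Y : ℝ, ε * (X ^ 2 + Y ^ 2) ≤ m * X ^ 2 - c * X * Y + s * Y ^ 2 := by
  obtain ⟨ε, hε⟩ : ∃ ε, ε * (4 * (m + s)) = 4 * m * s - c ^ 2 :=
    ⟨_, div_mul_cancel₀ _ (by positivity)⟩
  have hεm : ε < m := by nlinarith [sq_nonneg c]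
  refine ⟨ε, by nlinarith, fun X Y => ?_⟩
  have hsquare : 4 * (m - ε) * ((m - ε) * X ^ 2 - c * X * Y + (s - ε) * Y ^ 2)
      = (2 * (m - ε) * X - c * Y) ^ 2 + 4 * ε ^ 2 * Y ^ 2 := by linear_combination (-Y ^ 2) * hε
  nlinarith [sq_nonneg (2 * (m - ε) * X - c * Y), sq_nonneg (ε * Y)]

theorem exists_pos_sq_add_lt {m c p B : ℝ} (hm : 0 < m) (hB : 0 < B) (h : c * p < m * B) :
    ∃ Q > 0, (c + 2 * Q * p) ^ 2 < 4 * m * (2 * Q * B) := by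
  rcases eq_or_ne p 0 with rfl | hp
  · refine ⟨(c ^ 2 + 1) / (8 * m * B), by positivity, ?_⟩
    have hQ : 4 * m * (2 * ((c ^ 2 + 1) / (8 * m * B)) * B) = c ^ 2 + 1 := by field_simp; ring
    rw [hQ, mul_zero, add_zero]
    linarith
  · have hmB := mul_pos hm hB
    refine ⟨(2 * m * B - c * p) / (2 * p ^ 2), div_pos (by linarith) (by positivity), ?_⟩
    field_simp
    rw [div_lt_div_iff_of_pos_right (by positivity)]
    nlinarith [mul_lt_mul_of_pos_left h hmB]

namespace TwoAgent

/-- The system of the theorem, with `k = (A + b a / B) m`, `c = b / B` and `p = a m`. -/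
def IsSolution (m k c p B : ℝ) (z u w : ℝ → ℝ) : Prop :=
  ∀ t, 0 ≤ t → HasDerivAt z (m * (1 - exp (z t)) - u t + c * w t) t ∧
    HasDerivAt u (k * (exp (z t) - 1)) t ∧ HasDerivAt w (p * (exp (z t) - 1) - B * w t) t

noncomputable def lyapunov (k Q z u w : ℝ) : ℝ := exp z - z - 1 + u ^ 2 / (2 * k) + Q * w ^ 2

noncomputable def strictLyapunov (k Q η z u w : ℝ) : ℝ := lyapunov k Q z u w + η * (u * z)

section Pointwise

variable {m k c Q η M z u w : ℝ}

theorem strictLyapunov_le (hk : 0 < k) (hQ : 0 ≤ Q) (hη : 0 ≤ η) (hz : |z| ≤ M) :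
    strictLyapunov k Q η z u w ≤ (exp M + (2 * k)⁻¹ + Q + η) * (z ^ 2 + u ^ 2 + w ^ 2) := by
  have hM : 0 ≤ M := (abs_nonneg z).trans hz
  have hV := exp_sub_sub_one_le_exp_div_two_mul_sq hM (le_of_abs_le hz)
  have huz : u * z ≤ (u ^ 2 + z ^ 2) / 2 := by nlinarith [sq_nonneg (u - z)]
  unfold strictLyapunov lyapunov
  rw [div_eq_inv_mul]
  nlinarith [exp_pos M, inv_pos.2 (mul_pos two_pos hk), sq_nonneg z, sq_nonneg u, sq_nonneg w,
    mul_le_mul_of_nonneg_left huz hη]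

theorem le_strictLyapunov (hη : 0 ≤ η) (hηM : η ≤ exp (-M) / 2)
    (hηk : η ≤ (2 * k)⁻¹) (hz : |z| ≤ M) :
    min (min (exp (-M) / 4) ((2 * k)⁻¹ / 2)) Q * (z ^ 2 + u ^ 2 + w ^ 2)
      ≤ strictLyapunov k Q η z u w := by
  have hM : 0 ≤ M := (abs_nonneg z).trans hz
  have hV := exp_neg_div_two_mul_sq_le hM (neg_le_of_abs_le hz)
  have huz : -((u ^ 2 + z ^ 2) / 2) ≤ u * z := by nlinarith [sq_nonneg (u + z)]
  set γ := min (min (exp (-M) / 4) ((2 * k)⁻¹ / 2)) Q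
  have h1 : γ ≤ exp (-M) / 4 := (min_le_left _ _).trans (min_le_left _ _)
  have h2 : γ ≤ (2 * k)⁻¹ / 2 := (min_le_left _ _).trans (min_le_right _ _)
  have h3 : γ ≤ Q := min_le_right _ _
  unfold strictLyapunov lyapunov
  rw [div_eq_inv_mul]
  nlinarith [mul_le_mul_of_nonneg_left huz hη, mul_le_mul_of_nonneg_right h1 (sq_nonneg z),
    mul_le_mul_of_nonneg_right h2 (sq_nonneg u), mul_le_mul_of_nonneg_right h3 (sq_nonneg w),
    mul_le_mul_of_nonneg_right hηM (sq_nonneg z), mul_le_mul_of_nonneg_right hηk (sq_nonneg u)]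

theorem strictLyapunov_deriv_le {c' s ε β : ℝ}
    (hq : ∀ X Y, ε * (X ^ 2 + Y ^ 2) ≤ m * X ^ 2 - c' * X * Y + s * Y ^ 2) (hk : 0 < k)
    (hη : 0 ≤ η) (hηε : η * (k * exp M + m ^ 2 + c ^ 2) ≤ ε / 2) (hβ : 0 ≤ β)
    (hβη : β ≤ η / 2) (hβε : β * exp M ^ 2 ≤ ε / 2) (hz : |z| ≤ M) :
    -(m * (exp z - 1) ^ 2 - c' * (exp z - 1) * w + s * w ^ 2)
      + η * (k * (exp z - 1) * z + u * (m * (1 - exp z) - u + c * w))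
      ≤ -β * (z ^ 2 + u ^ 2 + w ^ 2) := by
  set X := exp z - 1
  have hM : 0 ≤ M := (abs_nonneg z).trans hz
  have hzX := abs_le_exp_mul_abs_exp_sub_one hz
  have hXz : X * z ≤ exp M * X ^ 2 := calc
    X * z ≤ |X| * |z| := by rw [← abs_mul]; exact le_abs_self _
    _ ≤ |X| * (exp M * |X|) := by gcongr
    _ = exp M * X ^ 2 := by rw [mul_left_comm, ← sq, sq_abs]
  have hz2 : z ^ 2 ≤ exp M ^ 2 * X ^ 2 := by
    rw [← sq_abs z, ← sq_abs X, ← mul_pow]; gcongr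
  have hcs : (m * X - c * w) ^ 2 ≤ (m ^ 2 + c ^ 2) * (X ^ 2 + w ^ 2) := by
    nlinarith [sq_nonneg (m * w + c * X)]
  have hamgm : u * (c * w - m * X) ≤ u ^ 2 / 2 + (m * X - c * w) ^ 2 / 2 := by
    nlinarith [sq_nonneg (u + (m * X - c * w))]
  have hβε' : β ≤ ε / 2 := by nlinarith [one_le_pow₀ (n := 2) (one_le_exp hM)]
  have hdiss : -(m * X ^ 2 - c' * X * w + s * w ^ 2)
      + η * (k * X * z + u * (m * (1 - exp z) - u + c * w))
      ≤ -(ε / 2) * (X ^ 2 + w ^ 2) - η / 2 * u ^ 2 := by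
    have hmX : m * (1 - exp z) = -(m * X) := by ring
    rw [hmX]
    nlinarith [hq X w, mul_le_mul_of_nonneg_left hXz (mul_nonneg hη hk.le),
      mul_le_mul_of_nonneg_left hamgm hη, mul_le_mul_of_nonneg_left hcs hη,
      mul_le_mul_of_nonneg_right hηε (add_nonneg (sq_nonneg X) (sq_nonneg w)),
      mul_nonneg (mul_nonneg hη hk.le) (mul_nonneg (exp_pos M).le (sq_nonneg w))]
  nlinarith [mul_le_mul_of_nonneg_left hz2 hβ, mul_le_mul_of_nonneg_right hβε (sq_nonneg X),
    mul_le_mul_of_nonneg_right hβη (sq_nonneg u), mul_le_mul_of_nonneg_right hβε' (sq_nonneg w)]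

end Pointwise

variable {m k c p B Q : ℝ} {z u w : ℝ → ℝ}

theorem IsSolution.hasDerivAt_lyapunov (h : IsSolution m k c p B z u w) (hk : k ≠ 0) {t : ℝ}
    (ht : 0 ≤ t) :
    HasDerivAt (fun t => lyapunov k Q (z t) (u t) (w t))
      (-(m * (exp (z t) - 1) ^ 2 - (c + 2 * Q * p) * (exp (z t) - 1) * w t
        + 2 * Q * B * w t ^ 2)) t := by
  obtain ⟨hz, hu, hw⟩ := h t ht
  refine ((((hz.exp.sub hz).sub_const 1).add ((hu.pow 2).div_const (2 * k))).add
    ((hw.pow 2).const_mul Q)).congr_deriv ?_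
  field_simp
  ring

theorem IsSolution.abs_le_lyapunov (h : IsSolution m k c p B z u w) (hk : 0 < k) (hQ : 0 ≤ Q)
    (hq : ∀ X Y, 0 ≤ m * X ^ 2 - (c + 2 * Q * p) * X * Y + 2 * Q * B * Y ^ 2) {t : ℝ}
    (ht : 0 ≤ t) : |z t| ≤ lyapunov k Q (z 0) (u 0) (w 0) + 1 := by
  have hV : lyapunov k Q (z t) (u t) (w t) ≤ lyapunov k Q (z 0) (u 0) (w 0) := by
    simpa using le_mul_exp_of_hasDerivAt_le_mul (K := 0)
      (fun s hs => h.hasDerivAt_lyapunov hk.ne' hs)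
      (fun s _ => by linarith [hq (exp (z s) - 1) (w s)]) ht
  have := abs_sub_one_le_exp_sub_sub_one (z t)
  unfold lyapunov at hV ⊢
  nlinarith [div_nonneg (sq_nonneg (u t)) (by positivity : (0:ℝ) ≤ 2 * k),
    mul_nonneg hQ (sq_nonneg (w t))]

theorem IsSolution.tendsto_zero (h : IsSolution m k c p B z u w) (hm : 0 < m) (hk : 0 < k)
    (hB : 0 < B) (hcp : c * p < m * B) :
    Tendsto z atTop (𝓝 0) ∧ Tendsto u atTop (𝓝 0) ∧ Tendsto w atTop (𝓝 0) := by
  obtain ⟨Q, hQ, hQc⟩ := exists_pos_sq_add_lt hm hB hcp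
  obtain ⟨ε, hε, hq⟩ := exists_pos_mul_le_quadratic hm (by positivity) hQc
  set M := lyapunov k Q (z 0) (u 0) (w 0) + 1
  have hz : ∀ t, 0 ≤ t → |z t| ≤ M := fun t => h.abs_le_lyapunov hk hQ.le
    (fun X Y => (mul_nonneg hε.le (by positivity)).trans (hq X Y))
  set η := min (min (exp (-M) / 2) (2 * k)⁻¹) (ε / 2 / (k * exp M + m ^ 2 + c ^ 2))
  have hη : 0 < η := by positivity
  have hηε : η * (k * exp M + m ^ 2 + c ^ 2) ≤ ε / 2 := by
    rw [← le_div_iff₀ (by positivity)]; exact min_le_right _ _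
  set β := min (η / 2) (ε / 2 / exp M ^ 2)
  have hβε : β * exp M ^ 2 ≤ ε / 2 := by
    rw [← le_div_iff₀ (by positivity)]; exact min_le_right _ _
  have hS := tendsto_zero_of_strict_lyapunov
    (W := fun t => strictLyapunov k Q η (z t) (u t) (w t))
    (S := fun t => z t ^ 2 + u t ^ 2 + w t ^ 2) (α := exp M + (2 * k)⁻¹ + Q + η) (β := β)
    (by positivity) (by positivity) (by positivity)
    (fun t ht => (h.hasDerivAt_lyapunov hk.ne' ht).add
      (((h t ht).2.1.mul (h t ht).1).const_mul η))
    (fun t ht => strictLyapunov_deriv_le hq hk hη.le hηε (by positivity) (min_le_left _ _) hβε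
      (hz t ht))
    (fun t ht => strictLyapunov_le hk hQ.le hη.le (hz t ht))
    (fun t ht => le_strictLyapunov hη.le ((min_le_left _ _).trans (min_le_left _ _))
      ((min_le_left _ _).trans (min_le_right _ _)) (hz t ht))
    (fun t => by positivity)
  refine ⟨tendsto_zero_of_sq_le hS fun t => ?_, tendsto_zero_of_sq_le hS fun t => ?_,
    tendsto_zero_of_sq_le hS fun t => ?_⟩ <;>
    nlinarith [sq_nonneg (z t), sq_nonneg (u t), sq_nonneg (w t)]

end TwoAgent

theorem two_agent_global_stability_general (β₁ β₂ ν₁ ν₂ : ℝ)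
    (hβ₁ : 0 < β₁) (hβ₂ : 0 < β₂)
    (hν₁ : ν₁ ∈ Set.Ioo (0:ℝ) 1) (hν₂ : ν₂ ∈ Set.Ioo (0:ℝ) 1)
    (A a B b m : ℝ)
    (hA : A = β₁ * (1 - ν₁) + β₂ * (1 - ν₂))
    (ha : a = β₁ * (1 - ν₁) - β₂ * (1 - ν₂))
    (hB : B = β₁ * ν₁ + β₂ * ν₂)
    (hb : b = -(β₁ * ν₁) + β₂ * ν₂)
    (hmpos : 0 < m)
    (hstab : B ^ 2 > a * b)
    (z u w : ℝ → ℝ)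
    (hz : ∀ t : ℝ, 0 ≤ t →
      HasDerivAt z (m * (1 - Real.exp (z t)) - u t + (b / B) * w t) t)
    (hu : ∀ t : ℝ, 0 ≤ t →
      HasDerivAt u ((A + b * a / B) * m * (Real.exp (z t) - 1)) t)
    (hw : ∀ t : ℝ, 0 ≤ t →
      HasDerivAt w (a * m * (Real.exp (z t) - 1) - B * w t) t) :
    Tendsto z atTop (nhds 0) ∧ Tendsto u atTop (nhds 0) ∧ Tendsto w atTop (nhds 0) := by
  obtain ⟨hν₁0, hν₁1⟩ := hν₁
  obtain ⟨hν₂0, hν₂1⟩ := hν₂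
  have hBpos : 0 < B := by rw [hB]; positivity
  have hAB : A * B + b * a = 2 * β₁ * β₂ * (ν₁ * (1 - ν₂) + ν₂ * (1 - ν₁)) := by
    subst hA ha hB hb; ring
  have hk : 0 < A + b * a / B := by
    rw [add_div_eq_mul_add_div _ _ hBpos.ne', hAB]
    have := mul_pos hν₁0 (sub_pos.2 hν₂1)
    have := mul_pos hν₂0 (sub_pos.2 hν₁1)
    positivity
  refine TwoAgent.IsSolution.tendsto_zero (fun t ht => ⟨hz t ht, hu t ht, hw t ht⟩) hmpos
    (mul_pos hk hmpos) hBpos ?_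
  rw [div_mul_eq_mul_div, div_lt_iff₀ hBpos]
  nlinarith

/-- Global asymptotic stability of the origin for the transformed two-agent
consumption system, under the condition `B² > a·b`. -/
theorem two_agent_global_stability (β₁ β₂ ν₁ ν₂ ρ₁ ρ₂ : ℝ)
    (hβ₁ : 0 < β₁) (hβ₂ : 0 < β₂)
    (hν₁ : ν₁ ∈ Set.Ioo (0:ℝ) 1) (hν₂ : ν₂ ∈ Set.Ioo (0:ℝ) 1)
    (hρ₁ : ρ₁ ∈ Set.Ioo (0:ℝ) 1) (hρ₂ : ρ₂ ∈ Set.Ioo (0:ℝ) 1)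
    (A a B b D d m : ℝ)
    (hA : A = β₁ * (1 - ν₁) + β₂ * (1 - ν₂))
    (ha : a = β₁ * (1 - ν₁) - β₂ * (1 - ν₂))
    (hB : B = β₁ * ν₁ + β₂ * ν₂)
    (hb : b = -(β₁ * ν₁) + β₂ * ν₂)
    (hD : D = β₁ * (1 - ν₁) * (1 - ρ₁) + β₂ * (1 - ν₂) * (1 - ρ₂))
    (hd : d = -(β₁ * (1 - ν₁) * (1 - ρ₁)) + β₂ * (1 - ν₂) * (1 - ρ₂))
    (hm : m = 1 - (D * B - b * d) / (A * B + b * a))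
    (hmpos : 0 < m)
    (hstab : B ^ 2 > a * b)
    (z u w : ℝ → ℝ)
    (hz : ∀ t : ℝ, 0 ≤ t →
      HasDerivAt z (m * (1 - Real.exp (z t)) - u t + (b / B) * w t) t)
    (hu : ∀ t : ℝ, 0 ≤ t →
      HasDerivAt u ((A + b * a / B) * m * (Real.exp (z t) - 1)) t)
    (hw : ∀ t : ℝ, 0 ≤ t →
      HasDerivAt w (a * m * (Real.exp (z t) - 1) - B * w t) t) :
    Tendsto z atTop (nhds 0) ∧ Tendsto u atTop (nhds 0) ∧ Tendsto w atTop (nhds 0) :=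
  two_agent_global_stability_general β₁ β₂ ν₁ ν₂ hβ₁ hβ₂ hν₁ hν₂ A a B b m hA ha hB hb hmpos hstab z
    u w hz hu hw
end

section
/- Fix δ > 0 and x₀ > 0. Let (x,y) be an admissible pair: y : [0,∞) → (0,∞) is Lebesgue measurable and locally bounded, and x : [0,∞) → ℝ is locally absolutely continuous with x(0) = x₀ and x'(t) = x(t)(1−x(t)) − y(t)x(t) for a.e. t ≥ 0 (then x(t) > 0 and x(t) ≤ x_max := max(x₀,1) for all t). Set ω(T) = ((1+δ)·x_max/δ)·e^{−δT}. Then for all 0 ≤ T < T′ such that t ↦ e^{−δt}(ln x(t) + ln y(t)) is integrable on [T,T′], one has ∫_T^{T′} e^{−δt}( ln x(t) + ln y(t) ) dt < ω(T). -/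
open MeasureTheory

/-- An admissible pair for problem (P1): `y` is a measurable, locally bounded,
positive control, and `x` is the (locally absolutely continuous) trajectory of the
logistic-harvesting dynamics `x' = x(1−x) − y·x`, `x 0 = x₀`, encoded by the
integral equation. -/
def P1Admissible (x₀ : ℝ) (x y : ℝ → ℝ) : Prop :=
  Measurable y ∧
  (∀ T : ℝ, 0 < T → ∃ C : ℝ, ∀ t ∈ Set.Icc (0:ℝ) T, |y t| ≤ C) ∧
  (∀ t : ℝ, 0 ≤ t → 0 < y t) ∧
  x 0 = x₀ ∧
  (∀ t : ℝ, 0 ≤ t → x t = x₀ + ∫ s in (0:ℝ)..t, (x s * (1 - x s) - y s * x s))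

open Set

/-! The utility is dominated by the state equation: `log u ≤ u - 1` gives
`ln x + ln y ≤ x y = x (1 - x) - x' ≤ M - x'`, where `M = max x₀ 1` bounds the trajectory.
Indeed `0 < x ≤ M`: the equation `x' = x (1 - x - y)` is linear in `x` with a locally bounded
coefficient, so `x` cannot reach `0`, and `x' ≤ 0` wherever `x > 1`. Integrating by parts,
`∫_T^{T'} e^{-δt} x' = e^{-δT'} x(T') - e^{-δT} x(T) + δ ∫_T^{T'} e^{-δt} x`, in which the first
and last terms are positive; hence the integral is less than `M e^{-δT} / δ + M e^{-δT}`.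

The integral equation constrains `x` only where its integrand is integrable (elsewhere the
interval integral is `0`); integrability on every `[0, b]` is recovered from the bounds on `x`,
which hold in both cases. -/

section IntegralEquation

variable {x f : ℝ → ℝ} {a b : ℝ}

theorem continuousOn_of_eq_add_integral (hab : a ≤ b) (hf : IntervalIntegrable f volume a b)
    (hx : ∀ t ∈ Icc a b, x t = x a + ∫ s in a..t, f s) : ContinuousOn x (Icc a b) := by
  have hprim := intervalIntegral.continuousOn_primitive_interval' hf left_mem_uIcc
  rw [uIcc_of_le hab] at hprim
  exact (continuousOn_const.add hprim).congr hx

theorem sub_eq_integral_of_eq_add_integral (hf : IntervalIntegrable f volume a b)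
    (hx : ∀ t ∈ Icc a b, x t = x a + ∫ s in a..t, f s) {s t : ℝ} (hs : s ∈ Icc a b)
    (ht : t ∈ Icc a b) : x t - x s = ∫ u in s..t, f u := by
  have hfrom_a : ∀ r ∈ Icc a b, IntervalIntegrable f volume a r := fun r hr =>
    hf.mono_set (uIcc_subset_uIcc_left (Icc_subset_uIcc hr))
  rw [hx t ht, hx s hs,
    ← intervalIntegral.integral_interval_sub_left (hfrom_a t ht) (hfrom_a s hs)]
  ring

theorem le_of_eq_add_integral_of_nonpos {M : ℝ} (hab : a ≤ b)
    (hf : IntervalIntegrable f volume a b) (hx : ∀ t ∈ Icc a b, x t = x a + ∫ s in a..t, f s)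
    (ha : x a ≤ M) (hneg : ∀ t ∈ Icc a b, M < x t → f t ≤ 0) : ∀ t ∈ Icc a b, x t ≤ M := by
  intro t ht
  by_contra! hxt
  have hcont := (continuousOn_of_eq_add_integral hab hf hx).mono (Icc_subset_Icc_right ht.2)
  set A := Icc a t ∩ x ⁻¹' Iic M
  have hAbdd : BddAbove A := ⟨t, fun s hs => hs.1.2⟩
  obtain ⟨⟨ht₁a, ht₁t⟩, hxt₁ : x (sSup A) ≤ M⟩ : sSup A ∈ A :=
    (hcont.preimage_isClosed_of_isClosed isClosed_Icc isClosed_Iic).csSup_mem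
      ⟨a, left_mem_Icc.2 ht.1, ha⟩ hAbdd
  have hdrop : ∫ s in sSup A..t, f s ≤ 0 := by
    rw [intervalIntegral.integral_of_le ht₁t]
    refine setIntegral_nonpos measurableSet_Ioc fun s hs => hneg s ⟨ht₁a.trans hs.1.le,
      hs.2.trans ht.2⟩ ?_
    by_contra! hxs
    exact (le_csSup hAbdd ⟨⟨ht₁a.trans hs.1.le, hs.2⟩, hxs⟩).not_gt hs.1
  have := sub_eq_integral_of_eq_add_integral hf hx ⟨ht₁a, ht₁t.trans ht.2⟩ ht
  linarith

theorem integral_mul_eq_of_eq_add_integral {w : ℝ → ℝ} (hab : a ≤ b)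
    (hf : IntervalIntegrable f volume a b) (hx : ∀ t ∈ Icc a b, x t = x a + ∫ s in a..t, f s)
    (hw : ContDiff ℝ 1 w) :
    ∫ t in a..b, w t * f t = w b * x b - w a * x a - ∫ t in a..b, deriv w t * x t := by
  set X : ℝ → ℝ := fun t => x a + ∫ s in a..t, f s
  have hXac : AbsolutelyContinuousOnInterval X a b :=
    (contDiffOn_const.absolutelyContinuousOnInterval).add
      (hf.absolutelyContinuousOnInterval_intervalIntegral left_mem_uIcc)
  have hderiv : ∀ᵐ t, t ∈ uIoc a b → w t * f t = w t * deriv X t := by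
    filter_upwards [hf.ae_hasDerivAt_integral] with t ht hmem
    rw [((ht (uIoc_subset_uIcc hmem) a left_mem_uIcc).const_add (x a)).deriv]
  have hXx : EqOn X x (uIcc a b) := by
    rw [uIcc_of_le hab]; exact fun t ht => (hx t ht).symm
  rw [intervalIntegral.integral_congr_ae hderiv,
    hw.contDiffOn.absolutelyContinuousOnInterval.integral_mul_deriv_eq_deriv_mul hXac,
    intervalIntegral.integral_congr fun t ht => congrArg (deriv w t * ·) (hXx ht),
    hXx (right_mem_uIcc), hXx left_mem_uIcc]

end IntegralEquation

section LinearIntegralEquation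

variable {x g : ℝ → ℝ} {K : ℝ}

theorem eq_zero_of_eq_integral_mul {p q : ℝ} (hpq : p ≤ q) (hx : ContinuousOn x (Icc p q))
    (hg : ∀ t ∈ Icc p q, |g t| ≤ K) (hK : K * (q - p) < 1)
    (heq : ∀ t ∈ Icc p q, x t = ∫ s in q..t, x s * g s) : ∀ t ∈ Icc p q, x t = 0 := by
  obtain ⟨r, hr, hmax⟩ := isCompact_Icc.exists_isMaxOn (nonempty_Icc.2 hpq)
    (continuous_abs.comp_continuousOn hx)
  have hK0 : 0 ≤ K := (abs_nonneg _).trans (hg p (left_mem_Icc.2 hpq))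
  have hself : |x r| ≤ K * |x r| * (q - p) :=
    calc |x r| = ‖∫ s in q..r, x s * g s‖ := by rw [heq r hr, Real.norm_eq_abs]
      _ ≤ K * |x r| * |r - q| := by
        refine intervalIntegral.norm_integral_le_of_norm_le_const fun s hs => ?_
        rw [uIoc_of_ge hr.2] at hs
        have hs' : s ∈ Icc p q := ⟨hr.1.trans hs.1.le, hs.2⟩
        rw [norm_mul, Real.norm_eq_abs, Real.norm_eq_abs, mul_comm K]
        exact mul_le_mul (hmax hs') (hg s hs') (abs_nonneg _) (abs_nonneg _)
      _ ≤ K * |x r| * (q - p) := by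
        rw [abs_sub_comm, abs_of_nonneg (sub_nonneg.2 hr.2)]
        gcongr
        exact hr.1
  have hr0 : |x r| ≤ 0 := by nlinarith [abs_nonneg (x r)]
  exact fun t ht => abs_nonpos_iff.1 ((hmax ht).trans hr0)

theorem pos_of_eq_add_integral_mul {a b : ℝ} (hab : a ≤ b)
    (hf : IntervalIntegrable (fun s => x s * g s) volume a b)
    (hx : ∀ t ∈ Icc a b, x t = x a + ∫ s in a..t, x s * g s)
    (hg : ∀ t ∈ Icc a b, |g t| ≤ K) (ha : 0 < x a) : ∀ t ∈ Icc a b, 0 < x t := by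
  intro t ht
  by_contra! hxt
  have hcont := continuousOn_of_eq_add_integral hab hf hx
  obtain ⟨r, hr, hxr⟩ : 0 ∈ x '' Icc a t :=
    intermediate_value_Icc' ht.1 (hcont.mono (Icc_subset_Icc_right ht.2)) ⟨hxt, ha.le⟩
  set Z := Icc a b ∩ x ⁻¹' {0}
  have hZbdd : BddBelow Z := ⟨a, fun s hs => hs.1.1⟩
  obtain ⟨⟨ht₀a, ht₀b⟩, hxt₀ : x (sInf Z) = 0⟩ : sInf Z ∈ Z :=
    (hcont.preimage_isClosed_of_isClosed isClosed_Icc isClosed_singleton).csInf_mem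
      ⟨r, ⟨hr.1, hr.2.trans ht.2⟩, hxr⟩ hZbdd
  set t₀ := sInf Z
  have hat₀ : a < t₀ := ht₀a.lt_of_ne fun h => ha.ne' (h ▸ hxt₀)
  have hK0 : 0 ≤ K := (abs_nonneg _).trans (hg a (left_mem_Icc.2 hab))
  -- on `[t₀ - h, t₀]` the equation is a contraction, so `x` vanishes there, before `t₀`
  set h := min (t₀ - a) (1 / (K + 1))
  have hh : 0 < h := lt_min (by linarith) (by positivity)
  have hKh : K * h < 1 := calc
    K * h ≤ K * (1 / (K + 1)) := by gcongr; exact min_le_right _ _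
    _ < 1 := by rw [mul_one_div, div_lt_one (by linarith)]; linarith
  have hsub : Icc (t₀ - h) t₀ ⊆ Icc a b :=
    Icc_subset_Icc (by linarith [min_le_left (t₀ - a) (1 / (K + 1))]) ht₀b
  have hzero := eq_zero_of_eq_integral_mul (by linarith) (hcont.mono hsub)
    (fun s hs => hg s (hsub hs)) (by rwa [sub_sub_cancel])
    (fun s hs => by
      rw [← sub_eq_integral_of_eq_add_integral hf hx ⟨ht₀a, ht₀b⟩ (hsub hs), hxt₀, sub_zero])
    (t₀ - h) (left_mem_Icc.2 (by linarith))
  have := csInf_le hZbdd ⟨hsub (left_mem_Icc.2 (by linarith)), hzero⟩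
  linarith

end LinearIntegralEquation

theorem hasDerivAt_exp_neg_mul (δ t : ℝ) :
    HasDerivAt (fun t => Real.exp (-δ * t)) (-δ * Real.exp (-δ * t)) t := by
  simpa [mul_comm] using ((hasDerivAt_id t).const_mul (-δ)).exp

theorem mul_integral_exp_neg_mul (δ a b : ℝ) :
    δ * ∫ t in a..b, Real.exp (-δ * t) = Real.exp (-δ * a) - Real.exp (-δ * b) := by
  have := intervalIntegral.integral_eq_sub_of_hasDerivAt (fun t _ => hasDerivAt_exp_neg_mul δ t)
    ((by fun_prop : Continuous fun t => -δ * Real.exp (-δ * t)).intervalIntegrable a b)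
  rw [intervalIntegral.integral_const_mul] at this
  linarith

theorem integral_exp_neg_mul_mul_eq_of_eq_add_integral {x f : ℝ → ℝ} {a b : ℝ} (δ : ℝ)
    (hab : a ≤ b) (hf : IntervalIntegrable f volume a b)
    (hx : ∀ t ∈ Icc a b, x t = x a + ∫ s in a..t, f s) :
    ∫ t in a..b, Real.exp (-δ * t) * f t = Real.exp (-δ * b) * x b - Real.exp (-δ * a) * x a +
      δ * ∫ t in a..b, Real.exp (-δ * t) * x t := by
  rw [integral_mul_eq_of_eq_add_integral hab hf hx (by fun_prop)]
  simp only [fun t => (hasDerivAt_exp_neg_mul δ t).deriv, mul_assoc,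
    intervalIntegral.integral_const_mul]
  ring

def logisticHarvestRhs (x y : ℝ → ℝ) (t : ℝ) : ℝ := x t * (1 - x t) - y t * x t

theorem aestronglyMeasurable_logisticHarvestRhs {x y : ℝ → ℝ} {s : Set ℝ} (hs : MeasurableSet s)
    (hx : ContinuousOn x s) (hy : Measurable y) :
    AEStronglyMeasurable (logisticHarvestRhs x y) (volume.restrict s) :=
  have hx' := hx.aestronglyMeasurable hs
  (hx'.mul (aestronglyMeasurable_const.sub hx')).sub (hy.aestronglyMeasurable.mul hx')

namespace P1Admissible

variable {x₀ : ℝ} {x y : ℝ → ℝ}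

theorem eq_add_integral (hadm : P1Admissible x₀ x y) {t : ℝ} (ht : 0 ≤ t) :
    x t = x 0 + ∫ s in 0..t, logisticHarvestRhs x y s :=
  hadm.2.2.2.1 ▸ hadm.2.2.2.2 t ht

theorem mem_Ioc_of_intervalIntegrable (hadm : P1Admissible x₀ x y) (hx₀ : 0 < x₀) {b : ℝ}
    (hb : 0 ≤ b) (hf : IntervalIntegrable (logisticHarvestRhs x y) volume 0 b) :
    ∀ t ∈ Icc 0 b, x t ∈ Ioc 0 (max x₀ 1) := by
  have hx : ∀ t ∈ Icc 0 b, _ := fun t ht => hadm.eq_add_integral ht.1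
  obtain ⟨-, hy_loc, hy_pos, hx0, -⟩ := hadm
  obtain ⟨Cx, hCx⟩ := isCompact_Icc.exists_bound_of_continuousOn
    (continuousOn_of_eq_add_integral hb hf hx)
  obtain ⟨Cy, hCy⟩ := hy_loc (b + 1) (by linarith)
  have hrhs : logisticHarvestRhs x y = fun s => x s * (1 - x s - y s) := by
    funext s; simp only [logisticHarvestRhs]; ring
  have hpos := pos_of_eq_add_integral_mul (K := 1 + Cx + Cy) hb (hrhs ▸ hf) (hrhs ▸ hx)
    (fun t ht => by
      have hxt := hCx t ht
      have hyt := hCy t ⟨ht.1, by linarith [ht.2]⟩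
      rw [Real.norm_eq_abs, abs_le] at hxt
      rw [abs_le] at hyt ⊢
      constructor <;> linarith)
    (hx0 ▸ hx₀)
  refine fun t ht => ⟨hpos t ht, le_of_eq_add_integral_of_nonpos hb hf hx
    (hx0 ▸ le_max_left _ _) (fun s hs hxs => ?_) t ht⟩
  have h1 : 1 < x s := (le_max_right _ _).trans_lt hxs
  have : x s * (1 - x s - y s) ≤ 0 :=
    mul_nonpos_of_nonneg_of_nonpos (by linarith) (by linarith [hy_pos s hs.1])
  simpa [hrhs] using this

theorem mem_Ioc (hadm : P1Admissible x₀ x y) (hx₀ : 0 < x₀) {t : ℝ} (ht : 0 ≤ t) :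
    x t ∈ Ioc 0 (max x₀ 1) := by
  by_cases hf : IntervalIntegrable (logisticHarvestRhs x y) volume 0 t
  · exact hadm.mem_Ioc_of_intervalIntegrable hx₀ ht hf t (right_mem_Icc.2 ht)
  · -- the interval integral takes the junk value `0`
    rw [hadm.eq_add_integral ht, intervalIntegral.integral_undef hf, add_zero, hadm.2.2.2.1]
    exact ⟨hx₀, le_max_left _ _⟩

theorem intervalIntegrable_zero_left (hadm : P1Admissible x₀ x y) (hx₀ : 0 < x₀) {b : ℝ}
    (hb : 0 ≤ b) :
    IntervalIntegrable (logisticHarvestRhs x y) volume 0 b := by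
  obtain ⟨hy_meas, hy_loc, hy_pos, -⟩ := id hadm
  set f := logisticHarvestRhs x y
  by_contra hbad
  -- Past the first time `σ` at which `f` stops being integrable, the interval integral is junk
  -- and `x = x₀`; on both sides `x` is continuous and bounded, so `f` is integrable past `σ`.
  set Bad := {s | 0 ≤ s ∧ ¬ IntervalIntegrable f volume 0 s}
  have hBad : Bad.Nonempty := ⟨b, hb, hbad⟩
  have hBdd : BddBelow Bad := ⟨0, fun s hs => hs.1⟩
  set σ := sInf Bad
  have hσ : 0 ≤ σ := le_csInf hBad fun s hs => hs.1
  have hbelow : ∀ s, 0 ≤ s → s < σ → IntervalIntegrable f volume 0 s := fun s hs hsσ => by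
    by_contra h
    exact (csInf_le hBdd ⟨hs, h⟩).not_gt hsσ
  have habove : ∀ s, σ < s → ¬ IntervalIntegrable f volume 0 s := fun s hs h => by
    obtain ⟨r, ⟨hr, hr'⟩, hrs⟩ := exists_lt_of_csInf_lt hBad hs
    exact hr' (h.mono_set (uIcc_subset_uIcc_left (Icc_subset_uIcc ⟨hr, hrs.le⟩)))
  have hcont_below : ContinuousOn x (Ioo 0 σ) := fun t ht => by
    obtain ⟨s, hts, hsσ⟩ := exists_between ht.2
    have hs : 0 ≤ s := ht.1.le.trans hts.le
    exact ((continuousOn_of_eq_add_integral hs (hbelow s hs hsσ)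
      fun r hr => hadm.eq_add_integral hr.1).continuousAt
        (Icc_mem_nhds ht.1 hts)).continuousWithinAt
  have hcont_above : ContinuousOn x (Ioo σ (σ + 1)) := continuousOn_const.congr fun t ht => by
    rw [hadm.eq_add_integral (hσ.trans ht.1.le), intervalIntegral.integral_undef (habove t ht.1),
      add_zero]
  obtain ⟨C, hC⟩ := hy_loc (σ + 1) (by linarith)
  have hint : ∀ p q, 0 ≤ p → q ≤ σ + 1 → ContinuousOn x (Ioo p q) → IntegrableOn f (Ioo p q) :=
    fun p q hp hq hc => by
      refine IntegrableOn.of_bound measure_Ioo_lt_top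
        (aestronglyMeasurable_logisticHarvestRhs measurableSet_Ioo hc hy_meas)
        (max x₀ 1 + max x₀ 1 ^ 2 + C * max x₀ 1)
        ((ae_restrict_iff' measurableSet_Ioo).2 (Filter.Eventually.of_forall fun t ht => ?_))
      have ht0 : 0 ≤ t := hp.trans ht.1.le
      obtain ⟨hxt, hxM⟩ := hadm.mem_Ioc hx₀ ht0
      have hyt := hy_pos t ht0
      have hyC : y t ≤ C := (le_abs_self _).trans (hC t ⟨ht0, ht.2.le.trans hq⟩)
      rw [Real.norm_eq_abs, abs_le]
      simp only [f, logisticHarvestRhs]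
      constructor <;> nlinarith
  have h₁ : IntervalIntegrable f volume 0 σ :=
    (intervalIntegrable_iff_integrableOn_Ioo_of_le hσ).2 (hint 0 σ le_rfl (by linarith) hcont_below)
  have h₂ : IntervalIntegrable f volume σ (σ + 1) :=
    (intervalIntegrable_iff_integrableOn_Ioo_of_le (by linarith)).2
      (hint σ (σ + 1) hσ le_rfl hcont_above)
  exact habove (σ + 1) (by linarith) (h₁.trans h₂)

theorem intervalIntegrable (hadm : P1Admissible x₀ x y) (hx₀ : 0 < x₀) {a b : ℝ} (ha : 0 ≤ a)
    (hb : 0 ≤ b) : IntervalIntegrable (logisticHarvestRhs x y) volume a b :=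
  (hadm.intervalIntegrable_zero_left hx₀ ha).symm.trans (hadm.intervalIntegrable_zero_left hx₀ hb)

theorem eq_add_integral_of_le (hadm : P1Admissible x₀ x y) (hx₀ : 0 < x₀) {T t : ℝ}
    (hT : 0 ≤ T) (hTt : T ≤ t) : x t = x T + ∫ s in T..t, logisticHarvestRhs x y s :=
  eq_add_of_sub_eq' (sub_eq_integral_of_eq_add_integral
    (hadm.intervalIntegrable_zero_left hx₀ (hT.trans hTt))
    (fun _ hs => hadm.eq_add_integral hs.1) ⟨hT, hTt⟩ (right_mem_Icc.2 (hT.trans hTt)))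

theorem log_add_log_le (hadm : P1Admissible x₀ x y) (hx₀ : 0 < x₀) {t : ℝ} (ht : 0 ≤ t) :
    Real.log (x t) + Real.log (y t) ≤ max x₀ 1 - logisticHarvestRhs x y t := by
  obtain ⟨hxt, hxM⟩ := hadm.mem_Ioc hx₀ ht
  have hyt := hadm.2.2.1 t ht
  have hlog := Real.log_le_sub_one_of_pos (mul_pos hxt hyt)
  rw [Real.log_mul hxt.ne' hyt.ne'] at hlog
  simp only [logisticHarvestRhs]
  nlinarith

theorem integral_exp_neg_mul_mul_sub_lt (hadm : P1Admissible x₀ x y) (hx₀ : 0 < x₀) {δ T T' : ℝ}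
    (hδ : 0 < δ) (hT : 0 ≤ T) (hTT' : T < T') :
    ∫ t in T..T', Real.exp (-δ * t) * (max x₀ 1 - logisticHarvestRhs x y t) <
      (1 + δ) * max x₀ 1 / δ * Real.exp (-δ * T) := by
  set M := max x₀ 1
  set f := logisticHarvestRhs x y
  have hT' : 0 ≤ T' := hT.trans hTT'.le
  have hf : IntervalIntegrable f volume T T' := hadm.intervalIntegrable hx₀ hT hT'
  have hparts := integral_exp_neg_mul_mul_eq_of_eq_add_integral δ hTT'.le hf
    fun t ht => hadm.eq_add_integral_of_le hx₀ hT ht.1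
  simp only [mul_sub]
  rw [intervalIntegral.integral_sub ((by fun_prop : Continuous _).intervalIntegrable _ _)
    (hf.continuousOn_mul (by fun_prop)), intervalIntegral.integral_mul_const, hparts]
  obtain ⟨-, hxTM⟩ := hadm.mem_Ioc hx₀ hT
  have hxT' := (hadm.mem_Ioc hx₀ hT').1
  have hpos : 0 ≤ ∫ t in T..T', Real.exp (-δ * t) * x t := intervalIntegral.integral_nonneg
    hTT'.le fun t ht => mul_nonneg (Real.exp_pos _).le (hadm.mem_Ioc hx₀ (hT.trans ht.1)).1.le
  have hI : (∫ t in T..T', Real.exp (-δ * t)) * M ≤ Real.exp (-δ * T) * M / δ := by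
    rw [le_div_iff₀ hδ, mul_right_comm, mul_comm _ δ, mul_integral_exp_neg_mul]
    nlinarith [Real.exp_pos (-δ * T'), le_max_right x₀ 1]
  have hET := mul_le_mul_of_nonneg_left hxTM (Real.exp_pos (-δ * T)).le
  have hET' := mul_pos (Real.exp_pos (-δ * T')) hxT'
  have hsplit : (1 + δ) * M / δ * Real.exp (-δ * T) =
      Real.exp (-δ * T) * M / δ + Real.exp (-δ * T) * M := by field_simp
  linarith [mul_nonneg hδ.le hpos]

end P1Admissible

/-- Uniform tail estimate for the discounted logarithmic utility:
`∫_T^{T'} e^{−δt}(ln x + ln y) dt < ω(T)` where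
`ω(T) = ((1+δ)·max(x₀,1)/δ)·e^{−δT}`. -/
theorem discounted_utility_tail_estimate (δ x₀ : ℝ) (hδ : 0 < δ) (hx₀ : 0 < x₀)
    (x y : ℝ → ℝ) (hadm : P1Admissible x₀ x y)
    (T T' : ℝ) (hT : 0 ≤ T) (hTT' : T < T')
    (hint : IntervalIntegrable
      (fun t => Real.exp (-δ * t) * (Real.log (x t) + Real.log (y t))) volume T T') :
    (∫ t in T..T', Real.exp (-δ * t) * (Real.log (x t) + Real.log (y t)))
      < ((1 + δ) * max x₀ 1 / δ) * Real.exp (-δ * T) := by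
  have hf := hadm.intervalIntegrable hx₀ hT (hT.trans hTT'.le)
  calc (∫ t in T..T', Real.exp (-δ * t) * (Real.log (x t) + Real.log (y t)))
      ≤ ∫ t in T..T', Real.exp (-δ * t) * (max x₀ 1 - logisticHarvestRhs x y t) :=
        intervalIntegral.integral_mono_on hTT'.le hint
          ((intervalIntegrable_const.sub hf).continuousOn_mul (by fun_prop))
          fun t ht => mul_le_mul_of_nonneg_left (hadm.log_add_log_le hx₀ (hT.trans ht.1))
            (Real.exp_pos _).le
    _ < _ := hadm.integral_exp_neg_mul_mul_sub_lt hx₀ hδ hT hTT'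
end

section
/- Fix n ≥ 2 and β_i > 0 for i = 1,…,n, and suppose ν_1 = ν_2 = … = ν_n = 1 (a maximally social society). Then a point (x̄, ȳ_1, …, ȳ_n) ∈ ℝ^{n+1} is an equilibrium of the well-mixed consumption system if and only if ȳ_1 = ȳ_2 = … = ȳ_n (call the common value ȳ) and either x̄ = 0 or x̄ = 1 − n·ȳ. In particular there are infinitely many equilibria. -/
/-!
With every `νᵢ = 1` the effort equations say that each `yᵢ` is the mean of the others, which
forces all `yᵢ` to equal some `c`; the equation for `x` then factors as `x (1 - n c - x) = 0`.
Varying `c` at `x = 0` gives infinitely many equilibria.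
-/

/-- Equilibrium condition for the well-mixed consumption system:
`ẋ = (1−x)x − x·Σᵢ yᵢ`,
`ẏᵢ = βᵢ((1−νᵢ)(x−ρᵢ) + νᵢ((1/(n−1))·Σ_{j≠i} yⱼ − yᵢ))`. -/
def WellMixedEq (n : ℕ) (β ν ρ : Fin n → ℝ) (x : ℝ) (y : Fin n → ℝ) : Prop :=
  ((1 - x) * x - x * ∑ i, y i = 0) ∧
  ∀ i : Fin n,
    β i * ((1 - ν i) * (x - ρ i)
      + ν i * ((1 / ((n : ℝ) - 1)) * (∑ j ∈ Finset.univ.erase i, y j) - y i)) = 0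

open Finset

theorem mul_one_sub_sub_mul_eq_zero_iff {R : Type*} [CommRing R] [NoZeroDivisors R] (x s : R) :
    (1 - x) * x - x * s = 0 ↔ x = 0 ∨ x = 1 - s := by
  rw [show (1 - x) * x - x * s = x * (1 - s - x) by ring, mul_eq_zero, sub_eq_zero,
    eq_comm (b := x)]

theorem forall_mean_erase_sub_eq_zero_iff {ι : Type*} [Fintype ι] [DecidableEq ι]
    (hι : 2 ≤ Fintype.card ι) (y : ι → ℝ) :
    (∀ i, 1 / ((Fintype.card ι : ℝ) - 1) * ∑ j ∈ univ.erase i, y j - y i = 0) ↔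
      ∃ c, ∀ i, y i = c := by
  have hcard : (2 : ℝ) ≤ Fintype.card ι := by exact_mod_cast hι
  have hcard₁ : (Fintype.card ι : ℝ) - 1 ≠ 0 := by linarith
  simp_rw [sum_erase_eq_sub (mem_univ _)]
  constructor
  · intro h
    refine ⟨(∑ j, y j) / Fintype.card ι, fun i => ?_⟩
    have hi := h i
    field_simp at hi ⊢
    linarith
  · rintro ⟨c, hc⟩ i
    simp only [hc, sum_const, card_univ, nsmul_eq_mul]
    field_simp
    ring

theorem wellMixedEq_iff_of_forall_nu_eq_one {n : ℕ} {β ν : Fin n → ℝ} (ρ : Fin n → ℝ)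
    (hβ : ∀ i, β i ≠ 0) (hν : ∀ i, ν i = 1) (x : ℝ) (y : Fin n → ℝ) :
    WellMixedEq n β ν ρ x y ↔
      (1 - x) * x - x * ∑ i, y i = 0 ∧
        ∀ i, 1 / ((n : ℝ) - 1) * ∑ j ∈ univ.erase i, y j - y i = 0 := by
  simp [WellMixedEq, hν, hβ]

theorem wellMixedEq_iff_exists_const_of_forall_nu_eq_one {n : ℕ} (hn : 2 ≤ n)
    {β ν : Fin n → ℝ} (ρ : Fin n → ℝ) (hβ : ∀ i, β i ≠ 0) (hν : ∀ i, ν i = 1)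
    (x : ℝ) (y : Fin n → ℝ) :
    WellMixedEq n β ν ρ x y ↔ ∃ c : ℝ, (∀ i, y i = c) ∧ (x = 0 ∨ x = 1 - n * c) := by
  have hmean := forall_mean_erase_sub_eq_zero_iff (ι := Fin n) (by simpa using hn) y
  rw [Fintype.card_fin] at hmean
  rw [wellMixedEq_iff_of_forall_nu_eq_one ρ hβ hν, hmean]
  constructor
  · rintro ⟨hx, c, hc⟩
    refine ⟨c, hc, ?_⟩
    simpa [hc, ← mul_one_sub_sub_mul_eq_zero_iff] using hx
  · rintro ⟨c, hc, hx⟩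
    refine ⟨?_, c, hc⟩
    simpa [hc, mul_one_sub_sub_mul_eq_zero_iff] using hx

/-- Maximally social society (`νᵢ = 1` for all `i`): the equilibria of the well-mixed
system are exactly the points with all efforts equal, `yᵢ = c`, and `x = 0` or
`x = 1 − n·c`; in particular there are infinitely many equilibria. -/
theorem well_mixed_maximally_social_equilibria (n : ℕ) (hn : 2 ≤ n)
    (β ν ρ : Fin n → ℝ) (hβ : ∀ i, 0 < β i) (hν : ∀ i, ν i = 1) :
    (∀ (x : ℝ) (y : Fin n → ℝ),
      WellMixedEq n β ν ρ x y ↔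
        ∃ c : ℝ, (∀ i, y i = c) ∧ (x = 0 ∨ x = 1 - n * c)) ∧
    {p : ℝ × (Fin n → ℝ) | WellMixedEq n β ν ρ p.1 p.2}.Infinite := by
  have key := wellMixedEq_iff_exists_const_of_forall_nu_eq_one hn ρ (fun i => (hβ i).ne') hν
  refine ⟨key, ?_⟩
  have : Nonempty (Fin n) := ⟨⟨0, by omega⟩⟩
  refine Set.infinite_of_injective_forall_mem (f := fun c : ℝ => (0, Function.const (Fin n) c))
    ((Prod.mk_right_injective 0).comp Function.const_injective) fun c => ?_
  exact (key 0 _).2 ⟨c, fun _ => rfl, Or.inl rfl⟩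
end

section
/- Fix n ≥ 2 and parameters β_i > 0, ν_i ∈ (0,1) and ρ_i > 0 for i = 1,…,n. Then the well-mixed consumption system has no equilibrium with x̄ = 0; that is, there is no point (0, ȳ_1, …, ȳ_n) ∈ ℝ^{n+1} at which all components of the vector field vanish. -/
/-- With `νᵢ ∈ (0,1)` and `ρᵢ > 0`, the well-mixed consumption system has no
equilibrium with vanishing resource stock `x̄ = 0`. -/
theorem well_mixed_no_zero_stock_equilibrium (n : ℕ) (hn : 2 ≤ n)
    (β ν ρ : Fin n → ℝ) (hβ : ∀ i, 0 < β i)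
    (hν : ∀ i, ν i ∈ Set.Ioo (0:ℝ) 1) (hρ : ∀ i, 0 < ρ i) :
    ¬ ∃ y : Fin n → ℝ, WellMixedEq n β ν ρ 0 y := by
  rintro ⟨y, -, h2⟩
  have hn1 : (0:ℝ) < (n:ℝ) - 1 := by
    have : (2:ℝ) ≤ (n:ℝ) := by exact_mod_cast hn
    linarith
  set S := ∑ i, y i with hS
  have key : ∀ i, ν i * (S - n * y i) = ((n:ℝ) - 1) * ((1 - ν i) * ρ i) := by
    intro i
    have he : (1 - ν i) * ((0:ℝ) - ρ i)
        + ν i * ((1 / ((n:ℝ) - 1)) * (∑ j ∈ Finset.univ.erase i, y j) - y i) = 0 := by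
      rcases mul_eq_zero.mp (h2 i) with h | h
      · exact absurd h (hβ i).ne'
      · exact h
    have herase : ∑ j ∈ Finset.univ.erase i, y j = S - y i :=
      Finset.sum_erase_eq_sub (Finset.mem_univ i)
    rw [herase] at he
    field_simp at he
    linarith [he]
  have hpos : ∀ i, 0 < S - n * y i := by
    intro i
    have hν0 := (hν i).1
    have hν1 := (hν i).2
    have hr : 0 < ((n:ℝ) - 1) * ((1 - ν i) * ρ i) := mul_pos hn1 (mul_pos (by linarith) (hρ i))
    nlinarith [key i]
  have hsum : ∑ i, (S - n * y i) = 0 := by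
    rw [Finset.sum_sub_distrib, ← Finset.mul_sum, ← hS, Finset.sum_const,
      Finset.card_univ, Fintype.card_fin, nsmul_eq_mul]
    ring
  have : 0 < ∑ i, (S - n * y i) := by
    apply Finset.sum_pos (fun i _ => hpos i)
    exact Finset.univ_nonempty_iff.mpr ⟨⟨0, by omega⟩⟩
  linarith
end

section
/- Fix n ≥ 2 and parameters β_i > 0, ν_i ∈ (0,1) and ρ_i ∈ (0,1) for i = 1,…,n. Then the well-mixed consumption system has exactly one equilibrium (x̄, ȳ_1, …, ȳ_n) ∈ ℝ^{n+1}, and this equilibrium satisfies x̄ + Σ_{i=1}^n ȳ_i = 1. -/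
/-!
Cancelling `βᵢ > 0` and writing `S = Σⱼ yⱼ`, the `i`-th effort equation reads
`(n-1)(1-νᵢ)(x-ρᵢ) + νᵢ(S - n·yᵢ) = 0`. At `x = 0` it forces `n·yᵢ < S` for every `i`, which is
absurd after summing over `i`; so the resource equation gives `x = 1 - S`. Then every `yᵢ` is an
affine function `Aᵢ + S·Bᵢ` of `S`, and summing determines `S` uniquely because each slope
`Bᵢ = 1 - (n-1)/(n·νᵢ)` is below `1/n`, whence `Σᵢ Bᵢ < 1`.
-/

open Finset

theorem existsUnique_eq_add_sum_mul {ι K : Type*} [Fintype ι] [Field K] (a b : ι → K)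
    (hb : ∑ i, b i ≠ 1) : ∃! y : ι → K, ∀ i, y i = a i + (∑ j, y j) * b i := by
  have hb' : 1 - ∑ i, b i ≠ 0 := sub_ne_zero.2 hb.symm
  set s := (∑ i, a i) / (1 - ∑ i, b i)
  have sum_eq_iff : ∀ t : K, t = ∑ i, a i + t * ∑ i, b i ↔ t = s := fun t => by
    rw [eq_div_iff hb']
    constructor <;> intro h <;> linear_combination h
  refine ⟨fun i => a i + s * b i, fun i => ?_, fun y hy => ?_⟩
  · rw [sum_add_distrib, ← mul_sum, ← (sum_eq_iff s).2 rfl]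
  · have hsum : ∑ j, y j = s := (sum_eq_iff _).1 <| by
      conv_lhs => rw [sum_congr rfl fun i _ => hy i]
      rw [sum_add_distrib, ← mul_sum]
    funext i
    rw [hy i, hsum]

noncomputable def effortIntercept (n : ℕ) (ν ρ : ℝ) : ℝ := (n - 1) * (1 - ν) * (1 - ρ) / (n * ν)

noncomputable def effortSlope (n : ℕ) (ν : ℝ) : ℝ := 1 - (n - 1) / (n * ν)

theorem effort_eq_zero_iff {n : ℕ} {ν ρ s yi : ℝ} (hn : n ≠ 0) (hν : ν ≠ 0) :
    ((n : ℝ) - 1) * (1 - ν) * (1 - s - ρ) + ν * (s - n * yi) = 0 ↔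
      yi = effortIntercept n ν ρ + s * effortSlope n ν := by
  rw [effortIntercept, effortSlope]
  field_simp
  constructor <;> intro h <;> linear_combination -h

theorem effortSlope_lt {n : ℕ} {ν : ℝ} (hn : 2 ≤ n) (hν : ν ∈ Set.Ioo 0 1) :
    effortSlope n ν < 1 / n := by
  have hn' : (2 : ℝ) ≤ n := by exact_mod_cast hn
  rw [effortSlope, sub_lt_comm, lt_div_iff₀ (by nlinarith [hν.1]), one_sub_div (by positivity)]
  field_simp
  nlinarith [hν.1, hν.2]

section WellMixed

variable {n : ℕ} {β ν ρ : Fin n → ℝ} {x : ℝ} {y : Fin n → ℝ}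

theorem wellMixedEq_iff (hn : 2 ≤ n) (hβ : ∀ i, β i ≠ 0) :
    WellMixedEq n β ν ρ x y ↔ x * (1 - x - ∑ i, y i) = 0 ∧
      ∀ i, ((n : ℝ) - 1) * (1 - ν i) * (x - ρ i) + ν i * (∑ j, y j - n * y i) = 0 := by
  have hn1 : (n : ℝ) - 1 ≠ 0 := by
    have : (2 : ℝ) ≤ n := by exact_mod_cast hn
    linarith
  unfold WellMixedEq
  refine and_congr (by ring_nf) (forall_congr' fun i => ?_)
  rw [sum_erase_eq_sub (mem_univ i), mul_eq_zero, or_iff_right (hβ i)]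
  field_simp
  ring_nf

theorem not_forall_effort_eq_zero_at_zero (hn : 2 ≤ n) (hν₀ : ∀ i, 0 ≤ ν i) (hν₁ : ∀ i, ν i < 1)
    (hρ : ∀ i, 0 < ρ i) :
    ¬ ∀ i, ((n : ℝ) - 1) * (1 - ν i) * (0 - ρ i) + ν i * (∑ j, y j - n * y i) = 0 := by
  intro h
  have hn' : (1 : ℝ) < n := by exact_mod_cast hn
  have below_mean : ∀ i, n * y i < ∑ j, y j := fun i => by
    have hpos : 0 < ν i * (∑ j, y j - n * y i) := by
      have := mul_pos (mul_pos (sub_pos.2 hn') (sub_pos.2 (hν₁ i))) (hρ i)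
      linear_combination this - h i
    linarith [pos_of_mul_pos_right hpos (hν₀ i)]
  have hne : (univ : Finset (Fin n)).Nonempty := univ_nonempty_iff.2 ⟨⟨0, by omega⟩⟩
  have := sum_lt_sum_of_nonempty hne fun i _ => below_mean i
  simp [← mul_sum] at this

theorem sum_effortSlope_lt_one (hn : 2 ≤ n) (hν : ∀ i, ν i ∈ Set.Ioo 0 1) :
    ∑ i, effortSlope n (ν i) < 1 := by
  have hne : (univ : Finset (Fin n)).Nonempty := univ_nonempty_iff.2 ⟨⟨0, by omega⟩⟩
  calc ∑ i, effortSlope n (ν i) < ∑ _i : Fin n, 1 / (n : ℝ) :=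
        sum_lt_sum_of_nonempty hne fun i _ => effortSlope_lt hn (hν i)
    _ = 1 := by rw [sum_const, card_univ, Fintype.card_fin, nsmul_eq_mul]; field_simp

theorem wellMixedEq_iff_affine (hn : 2 ≤ n) (hβ : ∀ i, β i ≠ 0) (hν : ∀ i, ν i ∈ Set.Ioo 0 1)
    (hρ : ∀ i, 0 < ρ i) :
    WellMixedEq n β ν ρ x y ↔ x = 1 - ∑ i, y i ∧
      ∀ i, y i = effortIntercept n (ν i) (ρ i) + (∑ j, y j) * effortSlope n (ν i) := by
  have hn0 : n ≠ 0 := by omega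
  rw [wellMixedEq_iff hn hβ]
  constructor
  · rintro ⟨hx, heff⟩
    have hx0 : x ≠ 0 := by
      rintro rfl
      exact not_forall_effort_eq_zero_at_zero hn (fun i => (hν i).1.le) (fun i => (hν i).2) hρ heff
    obtain rfl : x = 1 - ∑ i, y i := by
      linarith [(mul_eq_zero.1 hx).resolve_left hx0]
    exact ⟨rfl, fun i => (effort_eq_zero_iff hn0 (hν i).1.ne').1 (heff i)⟩
  · rintro ⟨rfl, hy⟩
    exact ⟨by ring, fun i => (effort_eq_zero_iff hn0 (hν i).1.ne').2 (hy i)⟩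

end WellMixed

/-- With `νᵢ ∈ (0,1)` and `ρᵢ ∈ (0,1)`, the well-mixed consumption system has exactly
one equilibrium, and the equilibrium satisfies `x̄ + Σᵢ ȳᵢ = 1`. -/
theorem well_mixed_unique_equilibrium (n : ℕ) (hn : 2 ≤ n)
    (β ν ρ : Fin n → ℝ) (hβ : ∀ i, 0 < β i)
    (hν : ∀ i, ν i ∈ Set.Ioo (0:ℝ) 1) (hρ : ∀ i, ρ i ∈ Set.Ioo (0:ℝ) 1) :
    (∃! p : ℝ × (Fin n → ℝ), WellMixedEq n β ν ρ p.1 p.2) ∧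
    (∀ (x : ℝ) (y : Fin n → ℝ), WellMixedEq n β ν ρ x y → x + ∑ i, y i = 1) := by
  have hchar (x : ℝ) (y : Fin n → ℝ) := wellMixedEq_iff_affine (x := x) (y := y) hn
    (fun i => (hβ i).ne') hν (fun i => (hρ i).1)
  refine ⟨?_, fun x y h => by linarith [((hchar x y).1 h).1]⟩
  obtain ⟨y, hy, huniq⟩ := existsUnique_eq_add_sum_mul (fun i => effortIntercept n (ν i) (ρ i))
    (fun i => effortSlope n (ν i)) (sum_effortSlope_lt_one hn hν).ne
  refine ⟨(1 - ∑ i, y i, y), (hchar _ _).2 ⟨rfl, hy⟩, ?_⟩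
  rintro ⟨x', y'⟩ h
  obtain ⟨rfl, hy'⟩ := (hchar x' y').1 h
  rw [huniq y' hy']
end

section
/- Fix n ≥ 2 and parameters β_i > 0, ν_i ∈ (0,1) and ρ_i ∈ (0,1) for i = 1,…,n, and set D = n·Π_{j=1}^n ν_j − Σ_{j=1}^n Π_{k≠j} ν_k (which is nonzero). Define x̄ = ( Σ_i ρ_i(ν_i−1)·Π_{j≠i} ν_j ) / D, and for each i, ȳ_i = 1/n + [ ρ_i(ν_i−1)·( (1−n)·Σ_{j≠i} Π_{k≠i,j} ν_k + n(n−2)·Π_{j≠i} ν_j ) − (1−n+nν_i)·Σ_{j≠i}( ρ_j(ν_j−1)·Π_{k≠i,j} ν_k ) ] / (n·D). Then (x̄, ȳ_1, …, ȳ_n) is an equilibrium of the well-mixed consumption system; in particular x̄ + Σ_{i=1}^n ȳ_i = 1 and all components of the vector field vanish at this point. -/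
/-!
Write `Pᵢ = ∏_{k ≠ i} νₖ`. Then `D = ∑ⱼ (νⱼ - 1) Pⱼ < 0`, and after exchanging the double sum over
pairs `j ≠ i` the numerators of the `ȳᵢ` add up to `-n ∑ᵢ ρᵢ(νᵢ - 1) Pᵢ`, so `∑ᵢ ȳᵢ = 1 - x̄`. This
makes `F₀` vanish and turns `∑_{j ≠ i} ȳⱼ` into `1 - x̄ - ȳᵢ`. Splitting the index `i` off the sums
defining `D` and `x̄` then reduces `Fᵢ = 0` to a rational identity in `νᵢ`, `ρᵢ`, `Pᵢ` and two sums
over `j ≠ i`.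
-/

open Finset

namespace Finset

variable {ι R : Type*} [DecidableEq ι]

theorem sum_mul_prod_erase_self [CommSemiring R] (s : Finset ι) (f : ι → R) :
    ∑ j ∈ s, f j * ∏ k ∈ s.erase j, f k = #s * ∏ k ∈ s, f k := by
  rw [sum_congr rfl fun j hj => mul_prod_erase s f hj, sum_const, nsmul_eq_mul]

theorem mul_prod_erase_erase [CommMonoid R] {s : Finset ι} {i j : ι} (hi : i ∈ s)
    (hj : j ∈ s.erase i) (f : ι → R) :
    f i * ∏ k ∈ (s.erase i).erase j, f k = ∏ k ∈ s.erase j, f k := by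
  rw [erase_right_comm]
  exact mul_prod_erase _ f (mem_erase.2 ⟨(ne_of_mem_erase hj).symm, hi⟩)

theorem sum_mul_prod_erase_eq_add_mul_sum [CommSemiring R] {s : Finset ι} {i : ι} (hi : i ∈ s)
    (c f : ι → R) :
    ∑ k ∈ s, c k * ∏ l ∈ s.erase k, f l =
      c i * ∏ l ∈ s.erase i, f l +
        f i * ∑ j ∈ s.erase i, c j * ∏ k ∈ (s.erase i).erase j, f k := by
  rw [← add_sum_erase s _ hi, mul_sum]
  congr 1
  refine sum_congr rfl fun j hj => ?_
  rw [← mul_prod_erase_erase hi hj, mul_left_comm]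

theorem sum_sum_erase_comm [AddCommGroup R] (s : Finset ι) (g : ι → ι → R) :
    ∑ i ∈ s, ∑ j ∈ s.erase i, g i j = ∑ j ∈ s, ∑ i ∈ s.erase j, g i j := by
  rw [sum_congr rfl fun i hi => sum_erase_eq_sub (f := g i) hi,
    sum_congr rfl fun j hj => sum_erase_eq_sub (f := fun i => g i j) hj,
    sum_sub_distrib, sum_sub_distrib, sum_comm]

end Finset

variable {ι R : Type*} [DecidableEq ι]

theorem card_mul_prod_sub_sum_prod_erase [CommRing R] (s : Finset ι) (ν : ι → R) :
    #s * ∏ j ∈ s, ν j - ∑ j ∈ s, ∏ k ∈ s.erase j, ν k =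
      ∑ j ∈ s, (ν j - 1) * ∏ k ∈ s.erase j, ν k := by
  simp only [← sum_mul_prod_erase_self, ← sum_sub_distrib, sub_mul, one_mul]

theorem sum_sub_one_mul_prod_erase_neg [CommRing R] [LinearOrder R] [IsStrictOrderedRing R]
    {s : Finset ι} (hs : s.Nonempty) {ν : ι → R}
    (hν : ∀ i ∈ s, ν i ∈ Set.Ioo 0 1) :
    ∑ j ∈ s, (ν j - 1) * ∏ k ∈ s.erase j, ν k < 0 :=
  sum_neg (fun j hj => mul_neg_of_neg_of_pos (sub_neg.2 (hν j hj).2)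
    (prod_pos fun k hk => (hν k (mem_of_mem_erase hk)).1)) hs

theorem sum_sub_one_mul_prod_erase_eq_add [CommRing R] {s : Finset ι} {i : ι} (hi : i ∈ s)
    (ν : ι → R) :
    ∑ j ∈ s, (ν j - 1) * ∏ k ∈ s.erase j, ν k =
      (ν i - 1) * ∏ k ∈ s.erase i, ν k +
        ν i * ((#s - 1) * ∏ k ∈ s.erase i, ν k -
          ∑ j ∈ s.erase i, ∏ k ∈ (s.erase i).erase j, ν k) := by
  rw [sum_mul_prod_erase_eq_add_mul_sum hi, ← cast_card_erase_of_mem hi,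
    ← sum_mul_prod_erase_self, ← sum_sub_distrib]
  simp only [sub_mul, one_mul]

theorem sum_equilibrium_numerator_eq [CommRing R] (s : Finset ι) (c ν : ι → R) :
    ∑ i ∈ s, (c i * ((1 - #s) * ∑ j ∈ s.erase i, ∏ k ∈ (s.erase i).erase j, ν k
          + #s * (#s - 2) * ∏ j ∈ s.erase i, ν j)
        - (1 - #s + #s * ν i) * ∑ j ∈ s.erase i, c j * ∏ k ∈ (s.erase i).erase j, ν k) =
      -#s * ∑ i ∈ s, c i * ∏ j ∈ s.erase i, ν j := by
  have hswap : ∑ i ∈ s, (1 - #s + #s * ν i) *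
        ∑ j ∈ s.erase i, c j * ∏ k ∈ (s.erase i).erase j, ν k =
      ∑ j ∈ s, c j * ((1 - #s) * ∑ i ∈ s.erase j, ∏ k ∈ (s.erase j).erase i, ν k
        + #s * (#s - 1) * ∏ k ∈ s.erase j, ν k) := by
    simp only [mul_sum]
    rw [sum_sum_erase_comm]
    refine sum_congr rfl fun j hj => ?_
    rw [← cast_card_erase_of_mem hj, mul_assoc (#s : R), ← sum_mul_prod_erase_self, mul_sum,
      ← sum_add_distrib, mul_sum]
    refine sum_congr rfl fun i _ => ?_
    rw [erase_right_comm]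
    ring
  rw [sum_sub_distrib, hswap, ← sum_sub_distrib, mul_sum]
  refine sum_congr rfl fun i _ => ?_
  ring

/-- For a fixed `i`: `P = ∏_{k ≠ i} νₖ`, `S = ∑_{j ≠ i} ∏_{k ≠ i, j} νₖ`,
`T = ∑_{j ≠ i} ρⱼ(νⱼ - 1) ∏_{k ≠ i, j} νₖ`, and `1 - x - y` stands for `∑_{j ≠ i} ȳⱼ`. -/
theorem well_mixed_component_eq_zero {K : Type*} [Field K] {N ν ρ P S T D x y : K}
    (hN : N ≠ 0) (hN1 : N - 1 ≠ 0) (hD0 : D ≠ 0)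
    (hD : D = (ν - 1) * P + ν * ((N - 1) * P - S))
    (hx : x = (ρ * (ν - 1) * P + ν * T) / D)
    (hy : y = 1 / N + (ρ * (ν - 1) * ((1 - N) * S + N * (N - 2) * P)
      - (1 - N + N * ν) * T) / (N * D)) :
    (1 - ν) * (x - ρ) + ν * (1 / (N - 1) * (1 - x - y) - y) = 0 := by
  subst hx hy
  field_simp
  rw [hD]
  ring

theorem well_mixed_equilibrium_formula_general (n : ℕ) (hn : 2 ≤ n)
    (β ν ρ : Fin n → ℝ)
    (hν : ∀ i, ν i ∈ Set.Ioo (0:ℝ) 1)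
    (D : ℝ)
    (hD : D = (n : ℝ) * ∏ j, ν j - ∑ j, ∏ k ∈ Finset.univ.erase j, ν k)
    (xbar : ℝ)
    (hx : xbar = (∑ i, ρ i * (ν i - 1) * ∏ j ∈ Finset.univ.erase i, ν j) / D)
    (ybar : Fin n → ℝ)
    (hy : ∀ i, ybar i = 1 / (n : ℝ) +
      (ρ i * (ν i - 1) *
          ((1 - (n : ℝ)) *
              (∑ j ∈ Finset.univ.erase i, ∏ k ∈ (Finset.univ.erase i).erase j, ν k)
            + (n : ℝ) * ((n : ℝ) - 2) * ∏ j ∈ Finset.univ.erase i, ν j)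
        - (1 - (n : ℝ) + (n : ℝ) * ν i) *
            ∑ j ∈ Finset.univ.erase i,
              ρ j * (ν j - 1) * ∏ k ∈ (Finset.univ.erase i).erase j, ν k)
      / ((n : ℝ) * D)) :
    D ≠ 0 ∧ WellMixedEq n β ν ρ xbar ybar ∧ xbar + ∑ i, ybar i = 1 := by
  have hn2 : (2 : ℝ) ≤ n := by exact_mod_cast hn
  have hn0 : (n : ℝ) ≠ 0 := by positivity
  have hn1 : (n : ℝ) - 1 ≠ 0 := by linarith
  have hcard : ((#(univ : Finset (Fin n)) : ℕ) : ℝ) = n := by rw [card_univ, Fintype.card_fin]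
  have hD_sum : D = ∑ j, (ν j - 1) * ∏ k ∈ univ.erase j, ν k := by
    rw [hD, ← card_mul_prod_sub_sum_prod_erase, hcard]
  have hD0 : D ≠ 0 := by
    rw [hD_sum]
    exact (sum_sub_one_mul_prod_erase_neg ⟨⟨0, by omega⟩, mem_univ _⟩ fun i _ => hν i).ne
  have hsum : ∑ i, ybar i = 1 - xbar := by
    have hnum := sum_equilibrium_numerator_eq univ (fun i => ρ i * (ν i - 1)) ν
    rw [hcard] at hnum
    rw [sum_congr rfl fun i _ => hy i, sum_add_distrib, ← sum_div univ _ ((n : ℝ) * D), hnum, hx,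
      sum_const, nsmul_eq_mul, hcard]
    field_simp
    ring
  refine ⟨hD0, ⟨by rw [hsum]; ring, fun i => ?_⟩, by linarith⟩
  have hDi := sum_sub_one_mul_prod_erase_eq_add (mem_univ i) ν
  have hxi := sum_mul_prod_erase_eq_add_mul_sum (mem_univ i) (fun i => ρ i * (ν i - 1)) ν
  rw [hcard, ← hD_sum] at hDi
  rw [sum_erase_eq_sub (mem_univ i), hsum,
    well_mixed_component_eq_zero hn0 hn1 hD0 hDi (hxi ▸ hx) (hy i), mul_zero]

/-- Explicit formula for the equilibrium of the well-mixed consumption system with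
`νᵢ ∈ (0,1)` and `ρᵢ ∈ (0,1)`: the denominator `D` is nonzero, the displayed point is
an equilibrium, and it satisfies `x̄ + Σᵢ ȳᵢ = 1`. -/
theorem well_mixed_equilibrium_formula (n : ℕ) (hn : 2 ≤ n)
    (β ν ρ : Fin n → ℝ) (hβ : ∀ i, 0 < β i)
    (hν : ∀ i, ν i ∈ Set.Ioo (0:ℝ) 1) (hρ : ∀ i, ρ i ∈ Set.Ioo (0:ℝ) 1)
    (D : ℝ)
    (hD : D = (n : ℝ) * ∏ j, ν j - ∑ j, ∏ k ∈ Finset.univ.erase j, ν k)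
    (xbar : ℝ)
    (hx : xbar = (∑ i, ρ i * (ν i - 1) * ∏ j ∈ Finset.univ.erase i, ν j) / D)
    (ybar : Fin n → ℝ)
    (hy : ∀ i, ybar i = 1 / (n : ℝ) +
      (ρ i * (ν i - 1) *
          ((1 - (n : ℝ)) *
              (∑ j ∈ Finset.univ.erase i, ∏ k ∈ (Finset.univ.erase i).erase j, ν k)
            + (n : ℝ) * ((n : ℝ) - 2) * ∏ j ∈ Finset.univ.erase i, ν j)
        - (1 - (n : ℝ) + (n : ℝ) * ν i) *
            ∑ j ∈ Finset.univ.erase i,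
              ρ j * (ν j - 1) * ∏ k ∈ (Finset.univ.erase i).erase j, ν k)
      / ((n : ℝ) * D)) :
    D ≠ 0 ∧ WellMixedEq n β ν ρ xbar ybar ∧ xbar + ∑ i, ybar i = 1 :=
  well_mixed_equilibrium_formula_general n hn β ν ρ hν D hD xbar hx ybar hy
end

section
/- Fix n ≥ 2 and parameters β_i > 0, ν_i ∈ (0,1) and ρ_i > 0 for i = 1,…,n. Then the star consumption system has no equilibrium with x̄ = 0; that is, there is no point (0, ȳ_1, …, ȳ_n) ∈ ℝ^{n+1} at which all components of the vector field vanish. -/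
/-- Equilibrium condition for the star consumption system with consumer `0` as hub:
`ẋ = (1−x)x − x·Σᵢ yᵢ`,
`ẏ₀ = β₀((1−ν₀)(x−ρ₀) + ν₀((1/(n−1))·Σ_{j≠0} yⱼ − y₀))`,
`ẏᵢ = βᵢ((1−νᵢ)(x−ρᵢ) + νᵢ(y₀ − yᵢ))` for `i ≠ 0`. -/
def StarEq (n : ℕ) [NeZero n] (β ν ρ : Fin n → ℝ) (x : ℝ) (y : Fin n → ℝ) : Prop :=
  ((1 - x) * x - x * ∑ i, y i = 0) ∧
  (β 0 * ((1 - ν 0) * (x - ρ 0)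
      + ν 0 * ((1 / ((n : ℝ) - 1)) * (∑ j ∈ Finset.univ.erase 0, y j) - y 0)) = 0) ∧
  ∀ i : Fin n, i ≠ 0 →
    β i * ((1 - ν i) * (x - ρ i) + ν i * (y 0 - y i)) = 0

/-- With `νᵢ ∈ (0,1)` and `ρᵢ > 0`, the star consumption system has no equilibrium
with vanishing resource stock `x̄ = 0`. -/
theorem star_no_zero_stock_equilibrium (n : ℕ) [NeZero n] (hn : 2 ≤ n)
    (β ν ρ : Fin n → ℝ) (hβ : ∀ i, 0 < β i)
    (hν : ∀ i, ν i ∈ Set.Ioo (0:ℝ) 1) (hρ : ∀ i, 0 < ρ i) :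
    ¬ ∃ y : Fin n → ℝ, StarEq n β ν ρ 0 y := by
  rintro ⟨y, -, h2, h3⟩
  have hn1 : (0:ℝ) < (n : ℝ) - 1 := by
    have : (2:ℝ) ≤ (n:ℝ) := by exact_mod_cast hn
    linarith
  -- each leaf is strictly below the hub
  have hlt : ∀ j ∈ Finset.univ.erase (0 : Fin n), y j < y 0 := by
    intro j hj
    have hj0 : j ≠ 0 := Finset.ne_of_mem_erase hj
    have h := h3 j hj0
    have hβj := hβ j
    have hνj := hν j
    have hρj := hρ j
    have hinner : (1 - ν j) * (0 - ρ j) + ν j * (y 0 - y j) = 0 := by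
      rcases mul_eq_zero.mp h with h' | h'
      · exact absurd h' (ne_of_gt hβj)
      · exact h'
    nlinarith [hνj.1, hνj.2]
  -- sum comparison
  have hcard : (Finset.univ.erase (0 : Fin n)).card = n - 1 := by
    simp [Finset.card_erase_of_mem]
  have hne : (Finset.univ.erase (0 : Fin n)).Nonempty := by
    rw [← Finset.card_pos, hcard]
    omega
  have hsum : ∑ j ∈ Finset.univ.erase (0 : Fin n), y j
      < ∑ j ∈ Finset.univ.erase (0 : Fin n), y 0 :=
    Finset.sum_lt_sum_of_nonempty hne hlt
  have hsum' : ∑ j ∈ Finset.univ.erase (0 : Fin n), y 0 = ((n:ℝ) - 1) * y 0 := by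
    rw [Finset.sum_const, hcard, nsmul_eq_mul]
    congr 1
    have : (1:ℕ) ≤ n := by omega
    push_cast [Nat.cast_sub this]
    ring
  -- hub equation forces sum / (n-1) > y 0
  have hν0 := hν 0
  have hρ0 := hρ 0
  have hinner0 : (1 - ν 0) * (0 - ρ 0)
      + ν 0 * ((1 / ((n : ℝ) - 1)) * (∑ j ∈ Finset.univ.erase (0 : Fin n), y j) - y 0) = 0 := by
    rcases mul_eq_zero.mp h2 with h' | h'
    · exact absurd h' (ne_of_gt (hβ 0))
    · exact h'
  set S := ∑ j ∈ Finset.univ.erase (0 : Fin n), y j with hS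
  rw [hsum'] at hsum
  have hdiv : (1 / ((n : ℝ) - 1)) * S < y 0 := by
    rw [div_mul_eq_mul_div, one_mul, div_lt_iff₀ hn1]
    linarith [hsum]
  nlinarith [hν0.1, hν0.2, mul_pos hν0.1 (sub_pos.mpr hdiv)]
end

section
/- Fix β₁,β₂ > 0, ν₁,ν₂ ∈ (0,1), ρ₁,ρ₂ ∈ (0,1), and set α_i = 1−ν_i. Then the two-agent consumption system has exactly one equilibrium (x̄, ȳ₁, ȳ₂) ∈ ℝ³, given by x̄ = (α₁ν₂ρ₁ + α₂ν₁ρ₂)/(α₂ν₁ + α₁ν₂), ȳ₁ = [ (1−ρ₁)α₁ν₂ + (1−ρ₂)α₂ν₁ − (ρ₁−ρ₂)α₁α₂ ] / ( 2(α₂ν₁ + α₁ν₂) ), and ȳ₂ = [ (1−ρ₁)α₁ν₂ + (1−ρ₂)α₂ν₁ − (ρ₂−ρ₁)α₁α₂ ] / ( 2(α₂ν₁ + α₁ν₂) ). In particular 0 < x̄ < 1. -/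
/-- Equilibrium condition for the two-agent consumption system:
`ẋ = (1−x)x − (y₁+y₂)x`, `ẏᵢ = βᵢ(αᵢ(x−ρᵢ) − νᵢ(yᵢ−yⱼ))` with `αᵢ = 1−νᵢ`. -/
def TwoAgentEq (β₁ β₂ ν₁ ν₂ ρ₁ ρ₂ x y₁ y₂ : ℝ) : Prop :=
  ((1 - x) * x - (y₁ + y₂) * x = 0) ∧
  (β₁ * ((1 - ν₁) * (x - ρ₁) - ν₁ * (y₁ - y₂)) = 0) ∧
  (β₂ * ((1 - ν₂) * (x - ρ₂) - ν₂ * (y₂ - y₁)) = 0)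

/-- The two-agent consumption system has exactly one equilibrium, given by the
explicit formulas, and the equilibrium resource stock satisfies `0 < x̄ < 1`. -/
theorem two_agent_unique_equilibrium (β₁ β₂ ν₁ ν₂ ρ₁ ρ₂ : ℝ)
    (hβ₁ : 0 < β₁) (hβ₂ : 0 < β₂)
    (hν₁ : ν₁ ∈ Set.Ioo (0:ℝ) 1) (hν₂ : ν₂ ∈ Set.Ioo (0:ℝ) 1)
    (hρ₁ : ρ₁ ∈ Set.Ioo (0:ℝ) 1) (hρ₂ : ρ₂ ∈ Set.Ioo (0:ℝ) 1)
    (α₁ α₂ : ℝ) (hα₁ : α₁ = 1 - ν₁) (hα₂ : α₂ = 1 - ν₂) :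
    (∀ x y₁ y₂ : ℝ,
      TwoAgentEq β₁ β₂ ν₁ ν₂ ρ₁ ρ₂ x y₁ y₂ ↔
        (x = (α₁ * ν₂ * ρ₁ + α₂ * ν₁ * ρ₂) / (α₂ * ν₁ + α₁ * ν₂) ∧
         y₁ = ((1 - ρ₁) * α₁ * ν₂ + (1 - ρ₂) * α₂ * ν₁ - (ρ₁ - ρ₂) * α₁ * α₂) /
              (2 * (α₂ * ν₁ + α₁ * ν₂)) ∧
         y₂ = ((1 - ρ₁) * α₁ * ν₂ + (1 - ρ₂) * α₂ * ν₁ - (ρ₂ - ρ₁) * α₁ * α₂) /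
              (2 * (α₂ * ν₁ + α₁ * ν₂)))) ∧
    0 < (α₁ * ν₂ * ρ₁ + α₂ * ν₁ * ρ₂) / (α₂ * ν₁ + α₁ * ν₂) ∧
    (α₁ * ν₂ * ρ₁ + α₂ * ν₁ * ρ₂) / (α₂ * ν₁ + α₁ * ν₂) < 1 := by
  obtain ⟨hν₁0, hν₁1⟩ := hν₁
  obtain ⟨hν₂0, hν₂1⟩ := hν₂
  obtain ⟨hρ₁0, hρ₁1⟩ := hρ₁
  obtain ⟨hρ₂0, hρ₂1⟩ := hρ₂
  have hα₁0 : 0 < α₁ := by rw [hα₁]; linarith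
  have hα₂0 : 0 < α₂ := by rw [hα₂]; linarith
  have hD : 0 < α₂ * ν₁ + α₁ * ν₂ := by positivity
  have hDne : α₂ * ν₁ + α₁ * ν₂ ≠ 0 := ne_of_gt hD
  have hnum : 0 < α₁ * ν₂ * ρ₁ + α₂ * ν₁ * ρ₂ := by positivity
  have hx0 : 0 < (α₁ * ν₂ * ρ₁ + α₂ * ν₁ * ρ₂) / (α₂ * ν₁ + α₁ * ν₂) :=
    div_pos hnum hD
  have hx1 : (α₁ * ν₂ * ρ₁ + α₂ * ν₁ * ρ₂) / (α₂ * ν₁ + α₁ * ν₂) < 1 := by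
    rw [div_lt_one hD]
    nlinarith [mul_pos hα₁0 hν₂0, mul_pos hα₂0 hν₁0]
  refine ⟨?_, hx0, hx1⟩
  intro x y₁ y₂
  constructor
  · rintro ⟨h1, h2, h3⟩
    rw [← hα₁, mul_eq_zero] at h2
    rw [← hα₂, mul_eq_zero] at h3
    have e1 : α₁ * (x - ρ₁) - ν₁ * (y₁ - y₂) = 0 := h2.resolve_left (ne_of_gt hβ₁)
    have e2 : α₂ * (x - ρ₂) - ν₂ * (y₂ - y₁) = 0 := h3.resolve_left (ne_of_gt hβ₂)
    have hxval : x = (α₁ * ν₂ * ρ₁ + α₂ * ν₁ * ρ₂) / (α₂ * ν₁ + α₁ * ν₂) := by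
      rw [eq_div_iff hDne]
      linear_combination ν₂ * e1 + ν₁ * e2
    have hxpos : 0 < x := hxval ▸ hx0
    have hs : y₁ + y₂ = 1 - x := by
      have : x * (1 - x - (y₁ + y₂)) = 0 := by linear_combination h1
      rcases mul_eq_zero.mp this with h | h
      · exact absurd h (ne_of_gt hxpos)
      · linarith
    have hxD : x * (α₂ * ν₁ + α₁ * ν₂) = α₁ * ν₂ * ρ₁ + α₂ * ν₁ * ρ₂ := by
      rw [hxval]; field_simp
    refine ⟨hxval, ?_, ?_⟩
    · rw [eq_div_iff (by positivity)]
      linear_combination (α₂ * ν₁ + α₁ * ν₂) * hs - α₂ * e1 + α₁ * e2 - hxD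
    · rw [eq_div_iff (by positivity)]
      linear_combination (α₂ * ν₁ + α₁ * ν₂) * hs + α₂ * e1 - α₁ * e2 - hxD
  · rintro ⟨hx, hy₁, hy₂⟩
    subst hx hy₁ hy₂ hα₁ hα₂
    refine ⟨?_, ?_, ?_⟩ <;> field_simp <;> ring
end

section
/- Fix ν₁,ν₂ ∈ (0,1), set α_i = 1−ν_i and Δ = α₂ν₁ + α₁ν₂ (so Δ > 0). Define, for (ρ₁,ρ₂) ∈ ℝ², x̄(ρ₁,ρ₂) = (α₁ν₂ρ₁ + α₂ν₁ρ₂)/Δ, ȳ₁(ρ₁,ρ₂) = [ (1−ρ₁)α₁ν₂ + (1−ρ₂)α₂ν₁ − (ρ₁−ρ₂)α₁α₂ ]/(2Δ), ȳ₂(ρ₁,ρ₂) = [ (1−ρ₁)α₁ν₂ + (1−ρ₂)α₂ν₁ − (ρ₂−ρ₁)α₁α₂ ]/(2Δ), and payoffs π_i(ρ₁,ρ₂) = x̄(ρ₁,ρ₂)·ȳ_i(ρ₁,ρ₂) for i = 1,2. Let ρ₁^# = ν₁(3ν₂ − ν₁ − 2ν₁ν₂)/( (1−ν₁)(ν₁+ν₂+2ν₁ν₂)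 ) and ρ₂^# = ν₂(3ν₁ − ν₂ − 2ν₂ν₁)/( (1−ν₂)(ν₂+ν₁+2ν₂ν₁) ). Then (ρ₁^#, ρ₂^#) is a Nash equilibrium of the consumption game: for every ρ₁ ∈ ℝ, π₁(ρ₁, ρ₂^#) ≤ π₁(ρ₁^#, ρ₂^#), and for every ρ₂ ∈ ℝ, π₂(ρ₁^#, ρ₂) ≤ π₂(ρ₁^#, ρ₂^#). -/
private lemma quad_vertex_max (A B C t t₀ : ℝ) (hA : 0 ≤ A) (h : B = 2 * A * t₀) :
    -A * t ^ 2 + B * t + C ≤ -A * t₀ ^ 2 + B * t₀ + C := by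
  subst h
  nlinarith [mul_nonneg hA (sq_nonneg (t - t₀))]

set_option maxHeartbeats 1000000 in
/-- The consumption game: each player `i` chooses its environmentalism `ρᵢ` and
receives as payoff the steady-state harvest `πᵢ = x̄·ȳᵢ` of the two-agent consumption
system; the displayed strategy profile `(ρ₁^#, ρ₂^#)` is a Nash equilibrium. -/
theorem consumption_game_nash_equilibrium (ν₁ ν₂ : ℝ)
    (hν₁ : ν₁ ∈ Set.Ioo (0:ℝ) 1) (hν₂ : ν₂ ∈ Set.Ioo (0:ℝ) 1)
    (α₁ α₂ Δ : ℝ) (hα₁ : α₁ = 1 - ν₁) (hα₂ : α₂ = 1 - ν₂)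
    (hΔ : Δ = α₂ * ν₁ + α₁ * ν₂)
    (xbar y1bar y2bar : ℝ → ℝ → ℝ)
    (hx : ∀ ρ₁ ρ₂ : ℝ, xbar ρ₁ ρ₂ = (α₁ * ν₂ * ρ₁ + α₂ * ν₁ * ρ₂) / Δ)
    (hy1 : ∀ ρ₁ ρ₂ : ℝ, y1bar ρ₁ ρ₂ =
      ((1 - ρ₁) * α₁ * ν₂ + (1 - ρ₂) * α₂ * ν₁ - (ρ₁ - ρ₂) * α₁ * α₂) / (2 * Δ))
    (hy2 : ∀ ρ₁ ρ₂ : ℝ, y2bar ρ₁ ρ₂ =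
      ((1 - ρ₁) * α₁ * ν₂ + (1 - ρ₂) * α₂ * ν₁ - (ρ₂ - ρ₁) * α₁ * α₂) / (2 * Δ))
    (π₁ π₂ : ℝ → ℝ → ℝ)
    (hπ₁ : ∀ ρ₁ ρ₂ : ℝ, π₁ ρ₁ ρ₂ = xbar ρ₁ ρ₂ * y1bar ρ₁ ρ₂)
    (hπ₂ : ∀ ρ₁ ρ₂ : ℝ, π₂ ρ₁ ρ₂ = xbar ρ₁ ρ₂ * y2bar ρ₁ ρ₂)
    (ρ₁s ρ₂s : ℝ)
    (hρ₁s : ρ₁s = ν₁ * (3 * ν₂ - ν₁ - 2 * ν₁ * ν₂) /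
      ((1 - ν₁) * (ν₁ + ν₂ + 2 * ν₁ * ν₂)))
    (hρ₂s : ρ₂s = ν₂ * (3 * ν₁ - ν₂ - 2 * ν₂ * ν₁) /
      ((1 - ν₂) * (ν₂ + ν₁ + 2 * ν₂ * ν₁))) :
    (∀ ρ₁ : ℝ, π₁ ρ₁ ρ₂s ≤ π₁ ρ₁s ρ₂s) ∧ (∀ ρ₂ : ℝ, π₂ ρ₁s ρ₂ ≤ π₂ ρ₁s ρ₂s) := by
  obtain ⟨h10, h11⟩ := hν₁
  obtain ⟨h20, h21⟩ := hν₂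
  subst hα₁ hα₂ hΔ
  have e1 : (0:ℝ) < 1 - ν₁ := by linarith
  have e2 : (0:ℝ) < 1 - ν₂ := by linarith
  set a := (1 - ν₁) * ν₂ with ha
  set b := (1 - ν₂) * ν₁ with hb
  set c := (1 - ν₁) * (1 - ν₂) with hc
  have hapos : 0 < a := mul_pos e1 h20
  have hbpos : 0 < b := mul_pos e2 h10
  have hcpos : 0 < c := mul_pos e1 e2
  have hΔpos : (0:ℝ) < b + a := by linarith
  have hΔne : b + a ≠ 0 := ne_of_gt hΔpos
  have hs1 : (0:ℝ) < ν₁ + ν₂ + 2 * ν₁ * ν₂ := by nlinarith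
  have hs2 : (0:ℝ) < ν₂ + ν₁ + 2 * ν₂ * ν₁ := by nlinarith
  have hd1 : ((1:ℝ) - ν₁) * (ν₁ + ν₂ + 2 * ν₁ * ν₂) ≠ 0 := ne_of_gt (mul_pos e1 hs1)
  have hd2 : ((1:ℝ) - ν₂) * (ν₂ + ν₁ + 2 * ν₂ * ν₁) ≠ 0 := ne_of_gt (mul_pos e2 hs2)
  have hA1 : (0:ℝ) ≤ a * (a + c) / (2 * (b + a) ^ 2) := by positivity
  have hA2 : (0:ℝ) ≤ b * (b + c) / (2 * (b + a) ^ 2) := by positivity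
  have ex1 : ∀ ρ₁ ρ₂ : ℝ, π₁ ρ₁ ρ₂ =
      -(a * (a + c) / (2 * (b + a) ^ 2)) * ρ₁ ^ 2
        + ((a * (b + a) - (a * (b - c) + b * (a + c)) * ρ₂) / (2 * (b + a) ^ 2)) * ρ₁
        + b * ρ₂ * ((b + a) - (b - c) * ρ₂) / (2 * (b + a) ^ 2) := by
    intro ρ₁ ρ₂
    rw [hπ₁, hx, hy1]
    field_simp
    ring
  have ex2 : ∀ ρ₁ ρ₂ : ℝ, π₂ ρ₁ ρ₂ =
      -(b * (b + c) / (2 * (b + a) ^ 2)) * ρ₂ ^ 2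
        + ((b * (b + a) - (b * (a - c) + a * (b + c)) * ρ₁) / (2 * (b + a) ^ 2)) * ρ₂
        + a * ρ₁ * ((b + a) - (a - c) * ρ₁) / (2 * (b + a) ^ 2) := by
    intro ρ₁ ρ₂
    rw [hπ₂, hx, hy2]
    field_simp
    ring
  have v1 : (a * (b + a) - (a * (b - c) + b * (a + c)) * ρ₂s) / (2 * (b + a) ^ 2)
      = 2 * (a * (a + c) / (2 * (b + a) ^ 2)) * ρ₁s := by
    rw [hρ₁s, hρ₂s, ha, hb, hc]
    field_simp
    ring
  have v2 : (b * (b + a) - (b * (a - c) + a * (b + c)) * ρ₁s) / (2 * (b + a) ^ 2)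
      = 2 * (b * (b + c) / (2 * (b + a) ^ 2)) * ρ₂s := by
    rw [hρ₁s, hρ₂s, ha, hb, hc]
    field_simp
    ring
  constructor
  · intro ρ₁
    rw [ex1 ρ₁ ρ₂s, ex1 ρ₁s ρ₂s]
    exact quad_vertex_max _ _ _ ρ₁ ρ₁s hA1 v1
  · intro ρ₂
    rw [ex2 ρ₁s ρ₂, ex2 ρ₁s ρ₂s]
    exact quad_vertex_max _ _ _ ρ₂ ρ₂s hA2 v2
end
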